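/- arXiv:1002.2911 — 5 statements merged into one kernel-verified Lean document; each statement's English description precedes it below -/
import Mathlib

section
/- Let φ₁, …, φ_p be DC functions on ℝ and let h be a continuous function on ℝ such that h(x) ∈ {φ₁(x), …, φ_p(x)} for every x ∈ ℝ. Then h is a DC function on ℝ. -/
open Set

/-- A function on `ℝ` is DC if it is a difference of two convex functions. -/
def IsDC (f : ℝ → ℝ) : Prop :=
  ∃ c₁ c₂ : ℝ → ℝ, ConvexOn ℝ univ c₁ ∧ ConvexOn ℝ univ c₂ ∧ ∀ x, f x = c₁ x - c₂ x

/-!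
For continuous functions on `ℝ`, convexity is a local property: subtract the chord over `[a, b]`
and look at the rightmost maximiser. Adding a common convex `C` makes every `φ i` convex, say
`F i`, and `h` a continuous selection `H` of them. By continuity, near `y` the only indices
selected by `H` are those active at `y`; so if `H = F i` at `x < y` and `H = F j` at `z > y`, then
`H + ∑ₖₗ max (F k) (F l)` lies above the convex `F i + F j + ∑_{(k,l) ≠ (i,j)} max (F k) (F l)`
at `x` and `z` and agrees with it at `y`, which yields the local convexity at `y`.
Hence `h = (H + ∑ₖₗ max (F k) (F l)) - (C + ∑ₖₗ max (F k) (F l))` is DC.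
-/

open Filter Topology

theorem ConvexOn.finset_sum {ι 𝕜 E β : Type*} [Semiring 𝕜] [PartialOrder 𝕜] [AddCommMonoid E]
    [AddCommMonoid β] [PartialOrder β] [IsOrderedAddMonoid β] [SMul 𝕜 E] [Module 𝕜 β]
    [PosSMulMono 𝕜 β] {s : Set E} (hs : Convex 𝕜 s) (t : Finset ι) {f : ι → E → β}
    (hf : ∀ i ∈ t, ConvexOn 𝕜 s (f i)) : ConvexOn 𝕜 s (fun x => ∑ i ∈ t, f i x) := by
  simpa only [← Finset.sum_apply] using
    Finset.sum_induction f (ConvexOn 𝕜 s) (fun _ _ => ConvexOn.add) (convexOn_const 0 hs) hf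

theorem ConvexOn.continuous_of_univ {f : ℝ → ℝ} (hf : ConvexOn ℝ univ f) : Continuous f :=
  continuousOn_univ.1 (hf.continuousOn isOpen_univ)

theorem ConvexOn.slope_le_slope_of_le_of_eq {𝕜 : Type*} [Field 𝕜] [LinearOrder 𝕜]
    [IsStrictOrderedRing 𝕜] {s : Set 𝕜} {C G : 𝕜 → 𝕜} (hC : ConvexOn 𝕜 s C) {x y z : 𝕜}
    (hxs : x ∈ s) (hzs : z ∈ s) (hxy : x < y) (hyz : y < z)
    (hx : C x ≤ G x) (hy : G y = C y) (hz : C z ≤ G z) :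
    slope G x y ≤ slope G y z := by
  have hyx : 0 < y - x := sub_pos.2 hxy
  have hzy : 0 < z - y := sub_pos.2 hyz
  simp only [slope_def_field]
  calc (G y - G x) / (y - x) ≤ (C y - C x) / (y - x) := by rw [hy]; gcongr
    _ ≤ (C z - C y) / (z - y) := hC.slope_mono_adjacent hxs hzs hxy hyz
    _ ≤ (G z - G y) / (z - y) := by rw [hy]; gcongr

theorem eventually_forall_eq_imp_eq {ι X Y : Type*} [Finite ι] [TopologicalSpace X]
    [TopologicalSpace Y] [T2Space Y] {F : ι → X → Y} {H : X → Y} {y : X}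
    (hF : ∀ i, ContinuousAt (F i) y) (hH : ContinuousAt H y) :
    ∀ᶠ w in 𝓝 y, ∀ i, H w = F i w → H y = F i y := by
  refine eventually_all.2 fun i => ?_
  by_cases hi : H y = F i y
  · exact Eventually.of_forall fun _ _ => hi
  · exact ((hH.ne_iff_eventually_ne (hF i)).1 hi).mono fun _ hw heq => (hw heq).elim

theorem le_zero_of_locally_slope_le {g : ℝ → ℝ} {a b : ℝ} (hg : ContinuousOn g (Icc a b))
    (ha : g a ≤ 0) (hb : g b ≤ 0)
    (hloc : ∀ y ∈ Ioo a b, ∀ᶠ p in 𝓝[<] y ×ˢ 𝓝[>] y, slope g p.1 y ≤ slope g y p.2)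
    {t : ℝ} (ht : t ∈ Icc a b) : g t ≤ 0 := by
  by_contra! hgt
  obtain ⟨m, hm, hmax⟩ := isCompact_Icc.exists_isMaxOn ⟨t, ht⟩ hg
  -- at the rightmost maximiser, slopes to the left are `≥ 0` and slopes to the right `< 0`
  have hT : IsCompact (Icc a b ∩ g ⁻¹' {g m}) :=
    isCompact_Icc.of_isClosed_subset
      (hg.preimage_isClosed_of_isClosed isClosed_Icc isClosed_singleton) inter_subset_left
  obtain ⟨y, ⟨hyI, hym⟩, hygreatest⟩ := hT.exists_isGreatest ⟨m, hm, rfl⟩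
  have hym : g y = g m := hym
  have hpos : 0 < g y := hgt.trans_le (hym ▸ hmax ht)
  have hya : a < y := hyI.1.lt_of_ne (by rintro rfl; linarith)
  have hyb : y < b := hyI.2.lt_of_ne (by rintro rfl; linarith)
  obtain ⟨⟨x, z⟩, hslope, hx, hz⟩ :=
    ((hloc y ⟨hya, hyb⟩).and (prod_mem_prod (Ioo_mem_nhdsLT hya) (Ioo_mem_nhdsGT hyb))).exists
  have hzI : z ∈ Icc a b := ⟨(hya.trans hz.1).le, hz.2.le⟩
  have hgx : g x ≤ g y := hym ▸ hmax ⟨hx.1.le, (hx.2.trans hyb).le⟩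
  have hgz : g z < g y := (hym ▸ hmax hzI).lt_of_ne
    fun h => hz.1.not_ge (hygreatest ⟨hzI, h.trans hym⟩)
  have := (slope_nonneg_iff_of_le hx.2.le).2 hgx
  have := (slope_neg_iff_of_le hz.1.le).2 hgz
  exact (hslope.trans_lt (by linarith)).false

theorem convexOn_univ_of_locally_slope_le {f : ℝ → ℝ} (hf : Continuous f)
    (hloc : ∀ y, ∀ᶠ p in 𝓝[<] y ×ˢ 𝓝[>] y, slope f p.1 y ≤ slope f y p.2) :
    ConvexOn ℝ univ f := by
  refine convexOn_of_slope_mono_adjacent convex_univ fun {x y z} _ _ hxy hyz => ?_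
  have hd : slope f x z * (z - x) = f z - f x := by
    rw [slope_def_field, div_mul_cancel₀ _ (sub_pos.2 (hxy.trans hyz)).ne']
  set d := slope f x z
  set g : ℝ → ℝ := fun t => f t - (f x + d * (t - x))
  have hslope_g : ∀ s t, s ≠ t → slope g s t = slope f s t - d := by
    intro s t hst
    simp only [g, slope_def_field]
    field_simp [sub_ne_zero.2 hst.symm]
    ring
  have hgloc : ∀ t, ∀ᶠ p in 𝓝[<] t ×ˢ 𝓝[>] t, slope g p.1 t ≤ slope g t p.2 := fun t =>
    ((hloc t).and (prod_mem_prod self_mem_nhdsWithin self_mem_nhdsWithin)).mono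
      fun p ⟨hp, hp₁, hp₂⟩ => by
        rw [hslope_g _ _ (ne_of_lt hp₁), hslope_g _ _ (ne_of_lt hp₂)]
        linarith
  have hgy : g y ≤ 0 := le_zero_of_locally_slope_le (by fun_prop) (by simp [g])
    (by simp only [g]; linarith) (fun t _ => hgloc t) ⟨hxy.le, hyz.le⟩
  simp only [g] at hgy
  calc (f y - f x) / (y - x) ≤ d := by rw [div_le_iff₀ (sub_pos.2 hxy)]; linarith
    _ ≤ (f z - f y) / (z - y) := by rw [le_div_iff₀ (sub_pos.2 hyz)]; linarith

theorem convexOn_add_sum_max_of_continuous_selection {ι : Type*} [Fintype ι]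
    {F : ι → ℝ → ℝ} (hF : ∀ i, ConvexOn ℝ univ (F i)) {H : ℝ → ℝ} (hH : Continuous H)
    (hsel : ∀ x, ∃ i, H x = F i x) :
    ConvexOn ℝ univ (fun x => H x + ∑ q : ι × ι, max (F q.1 x) (F q.2 x)) := by
  classical
  have hFc : ∀ i, Continuous (F i) := fun i => (hF i).continuous_of_univ
  refine convexOn_univ_of_locally_slope_le (by fun_prop) fun y => ?_
  have hact : ∀ᶠ w in 𝓝 y, ∀ i, H w = F i w → H y = F i y :=
    eventually_forall_eq_imp_eq (fun i => (hFc i).continuousAt) hH.continuousAt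
  filter_upwards [prod_mem_prod self_mem_nhdsWithin self_mem_nhdsWithin,
    (hact.filter_mono nhdsWithin_le_nhds).prod_mk (hact.filter_mono nhdsWithin_le_nhds)]
    with ⟨x, z⟩ ⟨hxy, hyz⟩ ⟨hx, hz⟩
  obtain ⟨i, hi⟩ := hsel x
  obtain ⟨j, hj⟩ := hsel z
  have hiy := hx i hi
  have hjy := hz j hj
  -- the summand `max (F i) (F j)` supplies the missing `F j` at `x` and `F i` at `z`
  set R : ℝ → ℝ := fun w => ∑ q ∈ Finset.univ.erase (i, j), max (F q.1 w) (F q.2 w)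
  have hsplit : ∀ w, ∑ q : ι × ι, max (F q.1 w) (F q.2 w) = max (F i w) (F j w) + R w :=
    fun w => (Finset.add_sum_erase _ _ (Finset.mem_univ (i, j))).symm
  have hR : ConvexOn ℝ univ R :=
    ConvexOn.finset_sum convex_univ _ fun q _ => (hF q.1).sup (hF q.2)
  refine ConvexOn.slope_le_slope_of_le_of_eq (((hF i).add (hF j)).add hR) (mem_univ _)
    (mem_univ _) hxy hyz ?_ ?_ ?_ <;> simp only [Pi.add_apply, hsplit]
  · linarith [le_max_right (F i x) (F j x)]
  · rw [← hiy, ← hjy, max_self, add_assoc]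
  · linarith [le_max_left (F i z) (F j z)]

theorem IsDC.of_continuous_selection {ι : Type*} [Fintype ι] {F : ι → ℝ → ℝ}
    (hF : ∀ i, ConvexOn ℝ univ (F i)) {H : ℝ → ℝ} (hH : Continuous H)
    (hsel : ∀ x, ∃ i, H x = F i x) : IsDC H :=
  ⟨fun x => H x + ∑ q : ι × ι, max (F q.1 x) (F q.2 x),
    fun x => ∑ q : ι × ι, max (F q.1 x) (F q.2 x),
    convexOn_add_sum_max_of_continuous_selection hF hH hsel,
    ConvexOn.finset_sum convex_univ _ fun q _ => (hF q.1).sup (hF q.2), fun x => by ring⟩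

theorem IsDC.exists_convexOn_forall_convexOn_add {ι : Type*} [Fintype ι] {φ : ι → ℝ → ℝ}
    (hφ : ∀ i, IsDC (φ i)) :
    ∃ C : ℝ → ℝ, ConvexOn ℝ univ C ∧ ∀ i, ConvexOn ℝ univ (fun x => φ i x + C x) := by
  classical
  choose g c hg hc hφgc using hφ
  refine ⟨fun x => ∑ j, c j x, ConvexOn.finset_sum convex_univ _ fun j _ => hc j, fun i => ?_⟩
  have hgc : (fun x => φ i x + ∑ j, c j x) =
      fun x => g i x + ∑ j ∈ Finset.univ.erase i, c j x := by
    ext x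
    rw [hφgc, ← Finset.add_sum_erase _ _ (Finset.mem_univ i)]
    ring
  exact hgc ▸ (hg i).add (ConvexOn.finset_sum convex_univ _ fun j _ => hc j)

theorem IsDC.sub_convexOn {f C : ℝ → ℝ} (hf : IsDC f) (hC : ConvexOn ℝ univ C) :
    IsDC (fun x => f x - C x) := by
  obtain ⟨c₁, c₂, hc₁, hc₂, hf⟩ := hf
  refine ⟨c₁, fun x => c₂ x + C x, hc₁, hc₂.add hC, fun x => ?_⟩
  simp only [hf]
  ring

/-- Mixing lemma: if `h` is continuous on `ℝ` and at each point `h(x)` coincides with one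
of finitely many DC functions `φ₁(x), …, φ_p(x)`, then `h` is DC. -/
theorem isDC_of_continuous_of_mem_finite_family (p : ℕ) (φ : Fin p → ℝ → ℝ)
    (hφ : ∀ i, IsDC (φ i)) (h : ℝ → ℝ) (hcont : Continuous h)
    (hmem : ∀ x : ℝ, ∃ i : Fin p, h x = φ i x) : IsDC h := by
  obtain ⟨C, hC, hφC⟩ := IsDC.exists_convexOn_forall_convexOn_add hφ
  have hhC : IsDC (fun x => h x + C x) :=
    IsDC.of_continuous_selection hφC (hcont.add hC.continuous_of_univ) fun x => by
      obtain ⟨i, hi⟩ := hmem x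
      exact ⟨i, by rw [hi]⟩
  simpa using hhC.sub_convexOn hC
end

section
/- Let f be a convex function on an open convex set C ⊆ ℝⁿ and let x₀ ∈ C. Let 0 ≠ q ∈ ℝⁿ, let qₙ → q in ℝⁿ, let tₙ ↘ 0, set xₙ := x₀ + tₙ qₙ (assumed to lie in C), and let zₙ ∈ ∂f(xₙ) for each n. Then ⟨q, zₙ⟩ → f'₊(x₀, q), where f'₊(x₀, q) is the one-sided directional derivative of f at x₀ in direction q. -/
open Set Filter Topology
open scoped RealInnerProductSpace

set_option maxHeartbeats 2000000

noncomputable section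

/-- The subdifferential of `f` at `x` relative to the set `C`. -/
def subdiff {n : ℕ} (C : Set (EuclideanSpace ℝ (Fin n)))
    (f : EuclideanSpace ℝ (Fin n) → ℝ) (x : EuclideanSpace ℝ (Fin n)) :
    Set (EuclideanSpace ℝ (Fin n)) :=
  {v | ∀ y ∈ C, f x + ⟪v, y - x⟫ ≤ f y}

/-- Convex functions are semismooth: if `f` is convex on an open convex set `C`, `x₀ ∈ C`,
`q ≠ 0`, `qₙ → q`, `tₙ ↘ 0`, `xₙ = x₀ + tₙ qₙ ∈ C` and `zₙ ∈ ∂f(xₙ)`, then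
`⟪q, zₙ⟫ → f'₊(x₀, q)` (in particular the one-sided directional derivative exists). -/
theorem inner_subdiff_tendsto_dirDeriv {n : ℕ} (C : Set (EuclideanSpace ℝ (Fin n)))
    (hCopen : IsOpen C) (hCconv : Convex ℝ C)
    (f : EuclideanSpace ℝ (Fin n) → ℝ) (hf : ConvexOn ℝ C f)
    (x₀ : EuclideanSpace ℝ (Fin n)) (hx₀ : x₀ ∈ C)
    (q : EuclideanSpace ℝ (Fin n)) (hq : q ≠ 0)
    (qs : ℕ → EuclideanSpace ℝ (Fin n)) (hqs : Tendsto qs atTop (𝓝 q))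
    (t : ℕ → ℝ) (htpos : ∀ m, 0 < t m) (htanti : Antitone t)
    (ht0 : Tendsto t atTop (𝓝 0))
    (hxC : ∀ m, x₀ + t m • qs m ∈ C)
    (z : ℕ → EuclideanSpace ℝ (Fin n))
    (hz : ∀ m, z m ∈ subdiff C f (x₀ + t m • qs m)) :
    ∃ d : ℝ, Tendsto (fun h : ℝ => (f (x₀ + h • q) - f x₀) / h) (𝓝[>] 0) (𝓝 d) ∧
      Tendsto (fun m => ⟪q, z m⟫) atTop (𝓝 d) := by
  classical
  -- a Lipschitz ball around x₀
  obtain ⟨K, s, hs, hlips⟩ := (hf.locallyLipschitzOn hCopen) hx₀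
  rw [hCopen.nhdsWithin_eq hx₀] at hs
  obtain ⟨r, hr0, hrball⟩ :=
    Metric.mem_nhds_iff.1 (Filter.inter_mem hs (hCopen.mem_nhds hx₀))
  have hballC : Metric.ball x₀ r ⊆ C := fun y hy => (hrball hy).2
  have hlip : ∀ a ∈ Metric.ball x₀ r, ∀ b ∈ Metric.ball x₀ r,
      f a - f b ≤ (K : ℝ) * ‖a - b‖ := by
    intro a ha b hb
    have h1 : dist (f a) (f b) ≤ (K : ℝ) * dist a b :=
      (lipschitzOnWith_iff_dist_le_mul.1 (hlips.mono (fun y hy => (hrball hy).1))) a ha b hb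
    calc f a - f b ≤ |f a - f b| := le_abs_self _
      _ = dist (f a) (f b) := (Real.dist_eq _ _).symm
      _ ≤ (K : ℝ) * dist a b := h1
      _ = (K : ℝ) * ‖a - b‖ := by rw [dist_eq_norm]
  have hK0 : (0 : ℝ) ≤ K := K.coe_nonneg
  set δ : ℝ := r / (‖q‖ + 1) with hδdef
  have hqpos : (0 : ℝ) < ‖q‖ + 1 := by positivity
  have hδ0 : 0 < δ := by positivity
  have hδr : δ * (‖q‖ + 1) = r := div_mul_cancel₀ _ (ne_of_gt hqpos)
  have hmemball : ∀ h : ℝ, |h| < δ → x₀ + h • q ∈ Metric.ball x₀ r := by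
    intro h hh
    rw [Metric.mem_ball, dist_eq_norm]
    have : ‖x₀ + h • q - x₀‖ = |h| * ‖q‖ := by
      rw [add_sub_cancel_left, norm_smul, Real.norm_eq_abs]
    rw [this]
    have h1 : |h| * ‖q‖ ≤ |h| * (‖q‖ + 1) := by
      apply mul_le_mul_of_nonneg_left (by linarith) (abs_nonneg h)
    have h2 : |h| * (‖q‖ + 1) < δ * (‖q‖ + 1) :=
      mul_lt_mul_of_pos_right hh hqpos
    linarith [hδr]
  have hmemC : ∀ h : ℝ, |h| < δ → x₀ + h • q ∈ C := fun h hh => hballC (hmemball h hh)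
  -- the 1-D restriction
  set A : ℝ →ᵃ[ℝ] EuclideanSpace ℝ (Fin n) := AffineMap.lineMap x₀ (x₀ + q) with hAdef
  have hA : ∀ c : ℝ, A c = x₀ + c • q := by
    intro c
    simp only [hAdef, AffineMap.lineMap_apply, vsub_eq_sub, vadd_eq_add, add_sub_cancel_left]
    abel
  have hconvA : ConvexOn ℝ (A ⁻¹' C) (f ∘ A) := hf.comp_affineMap A
  have hmemA : ∀ h : ℝ, |h| < δ → h ∈ A ⁻¹' C := by
    intro h hh; simp only [mem_preimage, hA]; exact hmemC h hh
  have h0A : (0 : ℝ) ∈ A ⁻¹' C := by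
    simp only [mem_preimage, hA]; simpa using hx₀
  set g : ℝ → ℝ := fun h => (f (x₀ + h • q) - f x₀) / h with hgdef
  have hsecant : ∀ a b : ℝ, a ≠ 0 → b ≠ 0 → |a| < δ → |b| < δ → a ≤ b →
      g a ≤ g b := by
    intro a b ha0 hb0 haδ hbδ hab
    have := hconvA.secant_mono h0A (hmemA a haδ) (hmemA b hbδ) ha0 hb0 hab
    simpa [hgdef, hA, Function.comp] using this
  have hgmono : MonotoneOn g (Ioo 0 δ) := by
    intro a ha b hb hab
    exact hsecant a b (ne_of_gt ha.1) (ne_of_gt hb.1)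
      (by rw [abs_of_pos ha.1]; exact ha.2) (by rw [abs_of_pos hb.1]; exact hb.2) hab
  have hbdd : BddBelow (g '' Ioo 0 δ) := by
    refine ⟨g (-(δ/2)), ?_⟩
    rintro _ ⟨h, hh, rfl⟩
    exact hsecant (-(δ/2)) h (by simp; linarith) (ne_of_gt hh.1)
      (by rw [abs_neg, abs_of_pos (by linarith : (0:ℝ) < δ/2)]; linarith)
      (by rw [abs_of_pos hh.1]; exact hh.2) (by linarith [hh.1])
  have hne : (Ioo (0:ℝ) δ).Nonempty := ⟨δ/2, by constructor <;> linarith⟩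
  set d : ℝ := sInf (g '' Ioo 0 δ) with hddef
  have htend1 : Tendsto g (𝓝[>] 0) (𝓝 d) :=
    MonotoneOn.tendsto_nhdsWithin_Ioo_right hne hgmono hbdd
  have hd_le : ∀ h, h ∈ Ioo 0 δ → d ≤ g h := fun h hh => csInf_le hbdd ⟨h, hh, rfl⟩
  refine ⟨d, htend1, ?_⟩
  -- notation for the sequence of points
  have hxtend : Tendsto (fun m => x₀ + t m • qs m) atTop (𝓝 x₀) := by
    have h1 : Tendsto (fun m => t m • qs m) atTop (𝓝 ((0:ℝ) • q)) := ht0.smul hqs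
    rw [zero_smul] at h1
    simpa using tendsto_const_nhds.add h1
  -- boundedness of the subgradients
  have hzb : ∀ m, (x₀ + t m • qs m) ∈ Metric.ball x₀ (r/2) → ‖z m‖ ≤ (K : ℝ) := by
    intro m hm
    rcases eq_or_ne (z m) 0 with h0 | h0
    · simp [h0, hK0]
    · have hzn : 0 < ‖z m‖ := norm_pos_iff.2 h0
      set u := ((r/4) / ‖z m‖) • z m with hu
      have hun : ‖u‖ = r/4 := by
        rw [hu, norm_smul, Real.norm_eq_abs, abs_of_nonneg (by positivity)]
        field_simp
      have hmball : ‖x₀ + t m • qs m - x₀‖ < r/2 := by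
        have := Metric.mem_ball.1 hm; rwa [dist_eq_norm] at this
      have hmem2 : x₀ + t m • qs m + u ∈ Metric.ball x₀ r := by
        rw [Metric.mem_ball, dist_eq_norm]
        have heq : x₀ + t m • qs m + u - x₀ = (x₀ + t m • qs m - x₀) + u := by abel
        calc ‖x₀ + t m • qs m + u - x₀‖ ≤ ‖x₀ + t m • qs m - x₀‖ + ‖u‖ := by
              rw [heq]; exact norm_add_le _ _
          _ < r/2 + r/4 := by rw [hun]; linarith
          _ < r := by linarith
      have hineq := hz m _ (hballC hmem2)
      have heq2 : x₀ + t m • qs m + u - (x₀ + t m • qs m) = u := by abel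
      rw [heq2] at hineq
      have hinner : ⟪z m, u⟫ = (r/4) * ‖z m‖ := by
        rw [hu, real_inner_smul_right, real_inner_self_eq_norm_sq]
        field_simp
      have hmemm : x₀ + t m • qs m ∈ Metric.ball x₀ r :=
        Metric.mem_ball.2 (lt_trans (Metric.mem_ball.1 hm) (by linarith))
      have hlipest : f (x₀ + t m • qs m + u) - f (x₀ + t m • qs m) ≤ (K : ℝ) * (r/4) := by
        have := hlip _ hmem2 _ hmemm
        rwa [heq2, hun] at this
      rw [hinner] at hineq
      have h4 : (r/4) * ‖z m‖ ≤ (K : ℝ) * (r/4) := by linarith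
      have hr4 : (0:ℝ) < r/4 := by linarith
      nlinarith
  -- eventual facts
  have hqnorm0 : Tendsto (fun m => ‖qs m - q‖) atTop (𝓝 0) :=
    tendsto_iff_norm_sub_tendsto_zero.1 hqs
  have hev1 : ∀ᶠ m in atTop, (x₀ + t m • qs m) ∈ Metric.ball x₀ (r/2) :=
    hxtend (Metric.ball_mem_nhds x₀ (by linarith))
  have hevq : ∀ᶠ m in atTop, ‖qs m‖ ≤ ‖q‖ + 1 := by
    filter_upwards [hqnorm0.eventually (gt_mem_nhds (by norm_num : (0:ℝ) < 1))] with m hm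
    calc ‖qs m‖ = ‖q + (qs m - q)‖ := by congr 1; abel
      _ ≤ ‖q‖ + ‖qs m - q‖ := norm_add_le _ _
      _ ≤ ‖q‖ + 1 := by linarith
  have hevtδ : ∀ᶠ m in atTop, t m < δ := by
    filter_upwards [ht0.eventually (gt_mem_nhds hδ0)] with m hm using hm
  rw [tendsto_order]
  constructor
  · -- lower bound
    intro a ha
    have hKpos : (0:ℝ) < (K:ℝ) + 1 := by linarith
    set η : ℝ := (d - a) / (2 * ((K:ℝ) + 1)) with hηdef
    have hη0 : 0 < η := by
      apply div_pos (by linarith) (by linarith)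
    filter_upwards [hev1, hevtδ, hqnorm0.eventually (gt_mem_nhds hη0)] with m hm1 hm2 hm3
    have htm := htpos m
    have hKz := hzb m hm1
    -- subgradient inequality at y = x₀
    have h1 := hz m x₀ hx₀
    have he1 : x₀ - (x₀ + t m • qs m) = -(t m • qs m) := by abel
    rw [he1, inner_neg_right, real_inner_smul_right] at h1
    -- f (x₀ + t m • qs m) - f x₀ ≤ t m * ⟪z m, qs m⟫
    -- Lipschitz between x m and x₀ + t m • q
    have hmm : (x₀ + t m • qs m) ∈ Metric.ball x₀ r :=
      Metric.mem_ball.2 (lt_trans (Metric.mem_ball.1 hm1) (by linarith))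
    have hmq : (x₀ + t m • q) ∈ Metric.ball x₀ r :=
      hmemball (t m) (by rw [abs_of_pos htm]; exact hm2)
    have h2 : f (x₀ + t m • q) - f (x₀ + t m • qs m) ≤ (K:ℝ) * (t m * ‖qs m - q‖) := by
      have := hlip _ hmq _ hmm
      have heq : x₀ + t m • q - (x₀ + t m • qs m) = t m • (q - qs m) := by
        rw [smul_sub]; abel
      rw [heq, norm_smul, Real.norm_eq_abs, abs_of_pos htm] at this
      calc f (x₀ + t m • q) - f (x₀ + t m • qs m) ≤ (K:ℝ) * (t m * ‖q - qs m‖) := this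
        _ = (K:ℝ) * (t m * ‖qs m - q‖) := by rw [norm_sub_rev]
    -- slope lower bound
    have h3 : d ≤ g (t m) := hd_le (t m) ⟨htm, hm2⟩
    have h3' : d * t m ≤ f (x₀ + t m • q) - f x₀ := by
      rw [hgdef] at h3
      have := (le_div_iff₀ htm).1 h3
      linarith
    -- inner product estimates
    have h4 : ⟪z m, q - qs m⟫ ≥ -((K:ℝ) * η) := by
      have hcs : |⟪z m, q - qs m⟫| ≤ ‖z m‖ * ‖q - qs m‖ := abs_real_inner_le_norm _ _
      have h5 : ‖z m‖ * ‖q - qs m‖ ≤ (K:ℝ) * η := by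
        apply mul_le_mul hKz _ (norm_nonneg _) hK0
        rw [norm_sub_rev]; exact le_of_lt hm3
      have := neg_abs_le ⟪z m, q - qs m⟫
      linarith
    have hsplit : ⟪q, z m⟫ = ⟪z m, qs m⟫ + ⟪z m, q - qs m⟫ := by
      have e1 : ⟪z m, q - qs m⟫ = ⟪z m, q⟫ - ⟪z m, qs m⟫ := inner_sub_right _ _ _
      have e2 : ⟪q, z m⟫ = ⟪z m, q⟫ := real_inner_comm _ _
      rw [e1, e2]; ring
    -- combine : t m * ⟪z m, qs m⟫ ≥ f(x m) - f x₀ ≥ d t m - K t m η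
    have h6 : t m * ⟪z m, qs m⟫ ≥ d * t m - (K:ℝ) * (t m * ‖qs m - q‖) := by linarith
    have h7 : ⟪z m, qs m⟫ ≥ d - (K:ℝ) * η := by
      have h8 : t m * ⟪z m, qs m⟫ ≥ t m * (d - (K:ℝ) * η) := by
        have : (K:ℝ) * (t m * ‖qs m - q‖) ≤ (K:ℝ) * (t m * η) :=
          mul_le_mul_of_nonneg_left
            (mul_le_mul_of_nonneg_left (le_of_lt hm3) (le_of_lt htm)) hK0
        nlinarith
      exact le_of_mul_le_mul_left (by linarith [h8]) htm
    have hfin : ⟪q, z m⟫ ≥ d - 2 * ((K:ℝ) * η) := by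
      rw [hsplit]; linarith
    have hηeq : 2 * ((K:ℝ) + 1) * η = d - a := by
      rw [hηdef]; field_simp
    have : 2 * ((K:ℝ) * η) < d - a := by nlinarith [hη0]
    linarith
  · -- upper bound
    intro b hb
    set ε : ℝ := b - d with hεdef
    have hε0 : 0 < ε := by rw [hεdef]; linarith
    obtain ⟨_, ⟨h₀, hh₀, rfl⟩, hgh₀⟩ :=
      exists_lt_of_csInf_lt (hne.image g) (show d < d + ε/2 by linarith)
    have hh₀0 : 0 < h₀ := hh₀.1
    have hyC : x₀ + h₀ • q ∈ C := hmemC h₀ (by rw [abs_of_pos hh₀0]; exact hh₀.2)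
    have hfy : f (x₀ + h₀ • q) - f x₀ < h₀ * (d + ε/2) := by
      rw [hgdef] at hgh₀
      have := (div_lt_iff₀ hh₀0).1 hgh₀
      linarith
    set c : ℝ := (h₀ * (ε/2)) / (2 * (K:ℝ) * (‖q‖ + 1) + 1) with hcdef
    have hden : (0:ℝ) < 2 * (K:ℝ) * (‖q‖ + 1) + 1 := by positivity
    have hc0 : 0 < c := by
      apply div_pos (by positivity) hden
    filter_upwards [hev1, hevq, ht0.eventually (gt_mem_nhds hc0)] with m hm1 hm2 hm3
    have htm := htpos m
    have hKz := hzb m hm1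
    -- subgradient inequality at y = x₀ + h₀ • q
    have h1 := hz m _ hyC
    have he1 : x₀ + h₀ • q - (x₀ + t m • qs m) = h₀ • q - t m • qs m := by abel
    rw [he1, inner_sub_right, real_inner_smul_right, real_inner_smul_right] at h1
    -- bounds
    have hcs : |⟪z m, qs m⟫| ≤ (K:ℝ) * (‖q‖ + 1) := by
      calc |⟪z m, qs m⟫| ≤ ‖z m‖ * ‖qs m‖ := abs_real_inner_le_norm _ _
        _ ≤ (K:ℝ) * (‖q‖ + 1) := mul_le_mul hKz hm2 (norm_nonneg _) hK0
    have hmm : (x₀ + t m • qs m) ∈ Metric.ball x₀ r :=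
      Metric.mem_ball.2 (lt_trans (Metric.mem_ball.1 hm1) (by linarith))
    have hx₀b : x₀ ∈ Metric.ball x₀ r := Metric.mem_ball_self hr0
    have h2 : f x₀ - f (x₀ + t m • qs m) ≤ (K:ℝ) * (t m * (‖q‖ + 1)) := by
      have := hlip _ hx₀b _ hmm
      have heq : x₀ - (x₀ + t m • qs m) = -(t m • qs m) := by abel
      rw [heq, norm_neg, norm_smul, Real.norm_eq_abs, abs_of_pos htm] at this
      calc f x₀ - f (x₀ + t m • qs m) ≤ (K:ℝ) * (t m * ‖qs m‖) := this
        _ ≤ (K:ℝ) * (t m * (‖q‖ + 1)) := by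
            apply mul_le_mul_of_nonneg_left
              (mul_le_mul_of_nonneg_left hm2 (le_of_lt htm)) hK0
    -- combine
    have h3 : h₀ * ⟪z m, q⟫ ≤ f (x₀ + h₀ • q) - f (x₀ + t m • qs m)
        + t m * ⟪z m, qs m⟫ := by linarith
    have h4 : t m * ⟪z m, qs m⟫ ≤ t m * ((K:ℝ) * (‖q‖ + 1)) := by
      apply mul_le_mul_of_nonneg_left _ (le_of_lt htm)
      have := le_abs_self ⟪z m, qs m⟫
      linarith
    have h5 : h₀ * ⟪z m, q⟫ < h₀ * (d + ε/2) + 2 * (t m * ((K:ℝ) * (‖q‖ + 1))) := by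
      linarith
    have h6 : 2 * (t m * ((K:ℝ) * (‖q‖ + 1))) < h₀ * (ε/2) := by
      have h7 : t m * (2 * (K:ℝ) * (‖q‖ + 1) + 1) < h₀ * (ε/2) := by
        have := (lt_div_iff₀ hden).1 hm3
        linarith
      nlinarith
    have h8 : h₀ * ⟪z m, q⟫ < h₀ * b := by
      rw [hεdef] at *
      nlinarith
    have := lt_of_mul_lt_mul_left (by linarith [h8] : h₀ * ⟪z m, q⟫ < h₀ * b) (le_of_lt hh₀0)
    rwa [real_inner_comm]
end
end

section
/- Let f be a convex function on an open convex set C ⊆ ℝⁿ and let x₀ ∈ C. Let 0 ≠ q ∈ ℝⁿ, let qₙ → q in ℝⁿ, let tₙ ↘ 0, and set xₙ := x₀ + tₙ qₙ (assumed to lie in C). Then diam ⟨q, ∂f(xₙ)⟩ → 0, where ⟨q, ∂f(xₙ)⟩ := {⟨q, v⟩ : v ∈ ∂f(xₙ)} ⊆ ℝ and diam denotes the diameter of this set of reals. -/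
open Set Filter Topology
open scoped RealInnerProductSpace

noncomputable section

lemma tendstoB_aux {σ : ℝ} (hσ : 0 < σ) {g : ℝ → ℝ}
    (hg : ConvexOn ℝ (Icc (-σ) σ) g) (hgc : ContinuousAt g 0)
    (τ : ℕ → ℝ) (hτpos : ∀ m, 0 < τ m) (hτle : ∀ m, 2 * τ m ≤ σ)
    (hτanti : Antitone τ) (hτ0 : Tendsto τ atTop (𝓝 0)) :
    Tendsto (fun m => (g (2 * τ m) - 2 * g (τ m) + g 0) / τ m) atTop (𝓝 0) := by
  have hmem : ∀ m, τ m ∈ Icc (-σ) σ := fun m =>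
    ⟨by nlinarith [hτpos m, hτle m], by nlinarith [hτpos m, hτle m]⟩
  have hmem2 : ∀ m, 2 * τ m ∈ Icc (-σ) σ := fun m =>
    ⟨by nlinarith [hτpos m], hτle m⟩
  have h0 : (0:ℝ) ∈ Icc (-σ) σ := ⟨by linarith, hσ.le⟩
  have hneg : -σ ∈ Icc (-σ) σ := ⟨le_refl _, by linarith⟩
  set a : ℕ → ℝ := fun m => (g (τ m) - g 0) / τ m with ha_def
  set c : ℕ → ℝ := fun m => (g (2 * τ m) - g (τ m)) / τ m with hc_def
  have hac : ∀ m, a m ≤ c m := by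
    intro m
    have h := hg.slope_mono_adjacent h0 (hmem2 m) (hτpos m) (by linarith [hτpos m])
    rw [sub_zero] at h
    have e : 2 * τ m - τ m = τ m := by ring
    rw [e] at h
    exact h
  have hBeq : ∀ m, (g (2 * τ m) - 2 * g (τ m) + g 0) / τ m = c m - a m := by
    intro m
    rw [ha_def, hc_def]
    have : g (2 * τ m) - 2 * g (τ m) + g 0
        = (g (2 * τ m) - g (τ m)) - (g (τ m) - g 0) := by ring
    rw [this, sub_div]
  have h_anti : Antitone a := by
    intro i j hij
    have h := hg.secant_mono h0 (hmem j) (hmem i) (hτpos j).ne' (hτpos i).ne' (hτanti hij)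
    simpa [sub_zero] using h
  have hbdd : BddBelow (range a) := by
    refine ⟨(g 0 - g (-σ)) / σ, ?_⟩
    rintro _ ⟨m, rfl⟩
    have h := hg.slope_mono_adjacent hneg (hmem m) (by linarith [hτpos m]) (hτpos m)
    have e1 : (0:ℝ) - -σ = σ := by ring
    rw [e1, sub_zero] at h
    exact h
  have haL : Tendsto a atTop (𝓝 (⨅ m, a m)) := tendsto_atTop_ciInf h_anti hbdd
  set L := ⨅ m, a m with hL_def
  have hLle : ∀ m, L ≤ a m := fun m => ciInf_le hbdd m
  rw [show (fun m => (g (2 * τ m) - 2 * g (τ m) + g 0) / τ m) = fun m => c m - a m from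
    funext hBeq]
  refine tendsto_order.2 ⟨fun b hb => ?_, fun ε hε => ?_⟩
  · exact Eventually.of_forall fun m => lt_of_lt_of_le hb (by linarith [hac m])
  · obtain ⟨m₀, hm₀⟩ : ∃ m₀, a m₀ < L + ε / 2 :=
      exists_lt_of_ciInf_lt (by linarith : L < L + ε / 2)
    set T := τ m₀ with hT_def
    have hT : 0 < T := hτpos m₀
    have hslope : Tendsto (fun m => (g T - g (τ m)) / (T - τ m)) atTop
        (𝓝 ((g T - g 0) / (T - 0))) := by
      exact Tendsto.div (tendsto_const_nhds.sub (hgc.tendsto.comp hτ0))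
        (tendsto_const_nhds.sub hτ0) (by simpa using hT.ne')
    have hlim : (g T - g 0) / (T - 0) = a m₀ := by rw [sub_zero]
    have hev1 : ∀ᶠ m in atTop, (g T - g (τ m)) / (T - τ m) < L + ε / 2 := by
      apply hslope.eventually_lt_const
      rw [hlim]; exact hm₀
    have hev2 : ∀ᶠ m in atTop, τ m < T / 2 := hτ0.eventually_lt_const (by linarith)
    filter_upwards [hev1, hev2] with m h1 h2
    have hcT : c m ≤ (g T - g (τ m)) / (T - τ m) := by
      have h := hg.secant_mono (hmem m) (hmem2 m) (hmem m₀)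
        (by linarith [hτpos m] : 2 * τ m ≠ τ m) (by linarith [hτpos m] : T ≠ τ m)
        (by linarith : 2 * τ m ≤ T)
      have e : 2 * τ m - τ m = τ m := by ring
      rw [e] at h
      exact h
    have := hLle m
    linarith [hcT, h1]

set_option maxHeartbeats 1600000 in
/-- If `f` is convex on an open convex set `C`, `x₀ ∈ C`, `q ≠ 0`, `qₙ → q`, `tₙ ↘ 0`
and `xₙ = x₀ + tₙ qₙ ∈ C`, then `diam ⟪q, ∂f(xₙ)⟫ → 0`. -/
theorem diam_inner_subdiff_tendsto_zero {n : ℕ} (C : Set (EuclideanSpace ℝ (Fin n)))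
    (hCopen : IsOpen C) (hCconv : Convex ℝ C)
    (f : EuclideanSpace ℝ (Fin n) → ℝ) (hf : ConvexOn ℝ C f)
    (x₀ : EuclideanSpace ℝ (Fin n)) (hx₀ : x₀ ∈ C)
    (q : EuclideanSpace ℝ (Fin n)) (hq : q ≠ 0)
    (qs : ℕ → EuclideanSpace ℝ (Fin n)) (hqs : Tendsto qs atTop (𝓝 q))
    (t : ℕ → ℝ) (htpos : ∀ m, 0 < t m) (htanti : Antitone t)
    (ht0 : Tendsto t atTop (𝓝 0))
    (hxC : ∀ m, x₀ + t m • qs m ∈ C) :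
    Tendsto
      (fun m => Metric.diam ((fun v => ⟪q, v⟫) '' subdiff C f (x₀ + t m • qs m)))
      atTop (𝓝 0) := by
  classical
  -- Lipschitz constant on a ball around x₀
  obtain ⟨K, U, hU, hLipU⟩ := (hf.locallyLipschitzOn hCopen) hx₀
  have hUnhds : U ∈ 𝓝 x₀ := by
    rwa [nhdsWithin_eq_nhds.2 (hCopen.mem_nhds hx₀)] at hU
  obtain ⟨δ, hδpos, hδsub⟩ := Metric.mem_nhds_iff.1
    (inter_mem hUnhds (hCopen.mem_nhds hx₀))
  have hball : Metric.ball x₀ δ ⊆ C := fun z hz => (hδsub hz).2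
  have hLip : LipschitzOnWith K f (Metric.ball x₀ δ) :=
    hLipU.mono fun z hz => (hδsub hz).1
  set Q : ℝ := ‖q‖ with hQ_def
  have hQ0 : 0 ≤ Q := norm_nonneg q
  set σ : ℝ := δ / (4 * (Q + 1)) with hσ_def
  have hσ : 0 < σ := by positivity
  have hσQ : σ * (Q + 1) = δ / 4 := by
    rw [hσ_def]; field_simp
  -- points on the line lie in the ball
  have hmemB : ∀ s : ℝ, |s| ≤ σ → x₀ + s • q ∈ Metric.ball x₀ δ := by
    intro s hs
    rw [Metric.mem_ball, dist_eq_norm, add_sub_cancel_left, norm_smul,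
      Real.norm_eq_abs]
    have h1 : |s| * Q ≤ σ * Q := by
      apply mul_le_mul_of_nonneg_right hs hQ0
    nlinarith [abs_nonneg s]
  -- g is convex on Icc (-σ) σ
  set g : ℝ → ℝ := fun s => f (x₀ + s • q) with hg_def
  have hgI : ConvexOn ℝ (Icc (-σ) σ) g := by
    refine ⟨convex_Icc _ _, ?_⟩
    intro s hs u hu a b ha hb hab
    have hkey : x₀ + (a * s + b * u) • q
        = a • (x₀ + s • q) + b • (x₀ + u • q) := by
      have hx : x₀ = (a + b) • x₀ := by rw [hab, one_smul]
      nth_rewrite 1 [hx]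
      module
    have hms : x₀ + s • q ∈ C := hball (hmemB s (abs_le.2 ⟨hs.1, hs.2⟩))
    have hmu : x₀ + u • q ∈ C := hball (hmemB u (abs_le.2 ⟨hu.1, hu.2⟩))
    calc g (a • s + b • u) = f (a • (x₀ + s • q) + b • (x₀ + u • q)) := by
          rw [hg_def]; simp only [smul_eq_mul]; rw [hkey]
      _ ≤ a * f (x₀ + s • q) + b * f (x₀ + u • q) := hf.2 hms hmu ha hb hab
      _ = a • g s + b • g u := by simp [hg_def]
  -- continuity of g at 0
  have hfc : ContinuousAt f x₀ :=
    (hf.continuousOn hCopen).continuousAt (hCopen.mem_nhds hx₀)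
  have hgc : ContinuousAt g 0 := by
    have hline : Continuous (fun s : ℝ => x₀ + s • q) :=
      continuous_const.add (continuous_id.smul continuous_const)
    have h0 : (fun s : ℝ => x₀ + s • q) 0 = x₀ := by simp
    have hcomp : ContinuousAt (f ∘ fun s : ℝ => x₀ + s • q) 0 := by
      apply ContinuousAt.comp _ hline.continuousAt
      simpa using hfc
    exact hcomp
  -- the auxiliary sequence τ
  set τ : ℕ → ℝ := fun m => min (t m) (σ / 2) with hτ_def
  have hτpos : ∀ m, 0 < τ m := fun m => lt_min (htpos m) (by linarith)
  have hτle : ∀ m, 2 * τ m ≤ σ := fun m => by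
    have := min_le_right (t m) (σ / 2); simp only [hτ_def]; linarith
  have hτanti : Antitone τ := fun i j hij => min_le_min (htanti hij) le_rfl
  have hτ0 : Tendsto τ atTop (𝓝 0) :=
    tendsto_of_tendsto_of_tendsto_of_le_of_le tendsto_const_nhds ht0
      (fun m => (hτpos m).le) (fun m => min_le_left _ _)
  have hB := tendstoB_aux hσ hgI hgc τ hτpos hτle hτanti hτ0
  -- error sequence
  set ε : ℕ → ℝ := fun m => ‖q - qs m‖ with hε_def
  have hε0 : Tendsto ε atTop (𝓝 0) := by
    have h1 : Tendsto (fun m => q - qs m) atTop (𝓝 (q - q)) :=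
      tendsto_const_nhds.sub hqs
    have := h1.norm
    simpa using this
  set F : ℕ → ℝ := fun m =>
    (g (2 * τ m) - 2 * g (τ m) + g 0) / τ m + 4 * K * ε m with hF_def
  have hF0 : Tendsto F atTop (𝓝 0) := by
    have h2 : Tendsto (fun m => 4 * (K:ℝ) * ε m) atTop (𝓝 (4 * K * 0)) :=
      hε0.const_mul _
    have := hB.add h2
    simpa using this
  have hmax : Tendsto (fun m => max (F m) 0) atTop (𝓝 0) := by
    have := hF0.max (tendsto_const_nhds (x := (0:ℝ)))
    simpa using this
  -- final squeeze
  refine tendsto_of_tendsto_of_tendsto_of_le_of_le' tendsto_const_nhds hmax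
    (Eventually.of_forall fun m => Metric.diam_nonneg) ?_
  have hev1 : ∀ᶠ m in atTop, t m < σ / 2 := ht0.eventually_lt_const (by linarith)
  have hev2 : ∀ᶠ m in atTop, ε m < 1 := hε0.eventually_lt_const one_pos
  filter_upwards [hev1, hev2] with m h1 h2
  have hτt : τ m = t m := min_eq_left h1.le
  set x : EuclideanSpace ℝ (Fin n) := x₀ + t m • qs m with hx_def
  have hqm : ‖qs m‖ ≤ Q + 1 := by
    have := norm_sub_norm_le (qs m) q
    have h3 : ‖qs m - q‖ = ε m := by rw [hε_def, norm_sub_rev]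
    rw [h3] at this
    linarith
  have hdx : dist x x₀ ≤ δ / 8 := by
    rw [hx_def, dist_eq_norm, add_sub_cancel_left, norm_smul, Real.norm_eq_abs,
      abs_of_pos (htpos m)]
    have : t m * ‖qs m‖ ≤ (σ / 2) * (Q + 1) :=
      mul_le_mul h1.le hqm (norm_nonneg _) (by linarith)
    nlinarith
  have hxball : x ∈ Metric.ball x₀ δ := by
    rw [Metric.mem_ball]; linarith
  have hxmem : x ∈ C := hball hxball
  -- the test points
  set p1 : EuclideanSpace ℝ (Fin n) := x + t m • q with hp1_def
  have hp1ball : p1 ∈ Metric.ball x₀ δ := by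
    rw [Metric.mem_ball]
    have hd1 : dist p1 x ≤ δ / 8 := by
      rw [hp1_def, dist_eq_norm, add_sub_cancel_left, norm_smul,
        Real.norm_eq_abs, abs_of_pos (htpos m)]
      have : t m * Q ≤ (σ / 2) * (Q + 1) :=
        mul_le_mul h1.le (by linarith) hQ0 (by linarith)
      nlinarith
    calc dist p1 x₀ ≤ dist p1 x + dist x x₀ := dist_triangle _ _ _
      _ < δ := by linarith
  have hp2ball : x₀ + (2 * t m) • q ∈ Metric.ball x₀ δ :=
    hmemB _ (by rw [abs_of_pos (by linarith [htpos m])]; linarith)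
  have hp3ball : x₀ + t m • q ∈ Metric.ball x₀ δ :=
    hmemB _ (by rw [abs_of_pos (htpos m)]; linarith)
  -- bounds on subgradients
  have hvK : ∀ v ∈ subdiff C f x, ‖v‖ ≤ (K : ℝ) := by
    intro v hv
    rcases eq_or_ne v 0 with rfl | hv0
    · simp
    set y : EuclideanSpace ℝ (Fin n) := x + ((δ / 2) * ‖v‖⁻¹) • v with hy_def
    have hnv : 0 < ‖v‖ := norm_pos_iff.2 hv0
    have hdyx : dist y x = δ / 2 := by
      rw [hy_def, dist_eq_norm, add_sub_cancel_left, norm_smul, Real.norm_eq_abs,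
        abs_of_pos (by positivity : (0:ℝ) < (δ / 2) * ‖v‖⁻¹)]
      field_simp
    have hyball : y ∈ Metric.ball x₀ δ := by
      rw [Metric.mem_ball]
      calc dist y x₀ ≤ dist y x + dist x x₀ := dist_triangle _ _ _
        _ ≤ δ / 2 + δ / 8 := by rw [hdyx]; linarith
        _ < δ := by linarith
    have hsub := hv y (hball hyball)
    have hinner : ⟪v, y - x⟫ = (δ / 2) * ‖v‖ := by
      rw [hy_def, add_sub_cancel_left, real_inner_smul_right,
        real_inner_self_eq_norm_mul_norm]
      field_simp
    have hlipxy : f y - f x ≤ (K : ℝ) * (δ / 2) := by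
      have := hLip.dist_le_mul y hyball x hxball
      rw [Real.dist_eq, hdyx] at this
      have := le_of_abs_le this
      linarith
    rw [hinner] at hsub
    nlinarith
  set Hi : ℝ := (f p1 - f x) / t m with hHi_def
  set Lo : ℝ := (f x - f x₀) / t m - (K : ℝ) * ε m with hLo_def
  have himg : (fun v => ⟪q, v⟫) '' subdiff C f x ⊆ Icc Lo Hi := by
    rintro _ ⟨v, hv, rfl⟩
    constructor
    · -- lower bound
      show Lo ≤ ⟪q, v⟫
      have hsub := hv x₀ hx₀
      have hd : x₀ - x = -(t m • qs m) := by rw [hx_def]; abel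
      rw [hd, inner_neg_right, real_inner_smul_right] at hsub
      have h4 : f x - f x₀ ≤ t m * ⟪v, qs m⟫ := by linarith
      have h5 : (f x - f x₀) / t m ≤ ⟪v, qs m⟫ := by
        rw [div_le_iff₀ (htpos m)]; linarith [mul_comm (t m) ⟪v, qs m⟫]
      have h6 : |⟪v, q - qs m⟫| ≤ (K : ℝ) * ε m := by
        calc |⟪v, q - qs m⟫| ≤ ‖v‖ * ‖q - qs m‖ := abs_real_inner_le_norm _ _
          _ ≤ (K : ℝ) * ε m := by
            apply mul_le_mul_of_nonneg_right (hvK v hv) (norm_nonneg _)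
      have h7 : ⟪v, q⟫ = ⟪v, qs m⟫ + ⟪v, q - qs m⟫ := by
        rw [inner_sub_right]; ring
      have h8 : -((K:ℝ) * ε m) ≤ ⟪v, q - qs m⟫ := neg_le_of_abs_le h6
      rw [real_inner_comm, h7, hLo_def]
      linarith
    · -- upper bound
      show ⟪q, v⟫ ≤ Hi
      have hsub := hv p1 (hball hp1ball)
      have hd : p1 - x = t m • q := add_sub_cancel_left x _
      rw [hd, real_inner_smul_right] at hsub
      rw [real_inner_comm, hHi_def, le_div_iff₀ (htpos m)]
      linarith [mul_comm (t m) ⟪v, q⟫]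
  -- Lipschitz comparisons with g
  have hcmp1 : |f p1 - g (2 * t m)| ≤ (K : ℝ) * (t m * ε m) := by
    have := hLip.dist_le_mul p1 hp1ball (x₀ + (2 * t m) • q) hp2ball
    have hd : dist p1 (x₀ + (2 * t m) • q) = t m * ε m := by
      rw [dist_eq_norm]
      have he : p1 - (x₀ + (2 * t m) • q) = t m • (qs m - q) := by
        rw [hp1_def, hx_def, smul_sub, two_mul, add_smul]; abel
      rw [he, norm_smul, Real.norm_eq_abs, abs_of_pos (htpos m), hε_def,
        norm_sub_rev]
    rw [Real.dist_eq, hd] at this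
    exact this
  have hcmp2 : |f x - g (t m)| ≤ (K : ℝ) * (t m * ε m) := by
    have := hLip.dist_le_mul x hxball (x₀ + t m • q) hp3ball
    have hd : dist x (x₀ + t m • q) = t m * ε m := by
      rw [dist_eq_norm]
      have he : x - (x₀ + t m • q) = t m • (qs m - q) := by
        rw [hx_def, smul_sub]; abel
      rw [he, norm_smul, Real.norm_eq_abs, abs_of_pos (htpos m), hε_def,
        norm_sub_rev]
    rw [Real.dist_eq, hd] at this
    exact this
  have hg0 : g 0 = f x₀ := by rw [hg_def]; simp
  have hKnn : (0:ℝ) ≤ K := K.coe_nonneg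
  have hεnn : 0 ≤ ε m := norm_nonneg _
  have hFm : F m = (g (2 * t m) - 2 * g (t m) + g 0) / t m + 4 * (K:ℝ) * ε m := by
    show (g (2 * τ m) - 2 * g (τ m) + g 0) / τ m + 4 * (K:ℝ) * ε m = _
    rw [hτt]
  have hHiLo : Hi - Lo ≤ F m := by
    rw [hHi_def, hLo_def, hFm]
    have e1 : f p1 ≤ g (2 * t m) + (K:ℝ) * (t m * ε m) := by
      have := le_of_abs_le hcmp1; linarith
    have e2 : g (t m) - (K:ℝ) * (t m * ε m) ≤ f x := by
      have := neg_le_of_abs_le hcmp2; linarith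
    have hnum : f p1 - f x - (f x - f x₀)
        ≤ (g (2 * t m) - 2 * g (t m) + g 0) + 3 * ((K:ℝ) * (t m * ε m)) := by
      rw [hg0]; linarith
    have hdivs : (f p1 - f x) / t m - (f x - f x₀) / t m
        ≤ (g (2 * t m) - 2 * g (t m) + g 0) / t m + 3 * ((K:ℝ) * ε m) := by
      rw [div_sub_div_same]
      have h9 : ((g (2 * t m) - 2 * g (t m) + g 0) + 3 * ((K:ℝ) * (t m * ε m))) / t m
          = (g (2 * t m) - 2 * g (t m) + g 0) / t m + 3 * ((K:ℝ) * ε m) := by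
        rw [add_div]
        congr 1
        field_simp [(htpos m).ne']
      have h10 : (f p1 - f x - (f x - f x₀)) / t m
          ≤ ((g (2 * t m) - 2 * g (t m) + g 0) + 3 * ((K:ℝ) * (t m * ε m))) / t m :=
        div_le_div_of_nonneg_right hnum (htpos m).le
      rw [h9] at h10
      exact h10
    linarith
  -- conclude
  rcases eq_empty_or_nonempty ((fun v => ⟪q, v⟫) '' subdiff C f x) with he | hne
  · rw [he, Metric.diam_empty]
    exact le_max_right _ _
  · obtain ⟨z, hz⟩ := hne
    have hzIcc := himg hz
    have hLoHi : Lo ≤ Hi := le_trans hzIcc.1 hzIcc.2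
    have hdiam : Metric.diam ((fun v => ⟪q, v⟫) '' subdiff C f x) ≤ Hi - Lo :=
      Metric.diam_le_of_forall_dist_le (by linarith)
        (fun z1 hz1 z2 hz2 => Real.dist_le_of_mem_Icc (himg hz1) (himg hz2))
    calc Metric.diam ((fun v => ⟪q, v⟫) '' subdiff C f x)
        ≤ Hi - Lo := hdiam
      _ ≤ F m := hHiLo
      _ ≤ max (F m) 0 := le_max_left _ _
end
end

section
/- Let ξ = (ξ₁, ξ₂) : [0, τ] → ℝ² be Lipschitz, suppose the right derivative ξ'₊(s) exists for each s ∈ [0, τ), and suppose lim_{s→0+} ξ'₊(s) = (1, 0). Then there exists τ₃ ∈ (0, τ) such that: ξ₁ is strictly increasing and Lipschitz on [0, τ₃]; its inverse (ξ₁)⁻¹ is Lipschitz on [0, α], where α := ξ₁(τ₃) > ξ₁(0); and, setting g := ξ₂ ∘ (ξ₁)⁻¹ on [ξ₁(0), α], the function g is Lipschitz and the map ψ(x) := (x, g(x)), x ∈ [ξ₁(0), α], satisfies ψ([ξ₁(0), α]) = ξ([0, τ₃]). -/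
open Set Filter Topology

noncomputable section

/-- Step 2 of the proof: if `ξ = (ξ₁, ξ₂) : [0, τ] → ℝ²` is Lipschitz, the right
derivative `ξ'₊(s)` exists for each `s ∈ [0, τ)` and `ξ'₊(s) → (1, 0)` as `s → 0+`,
then for some `τ₃ ∈ (0, τ)` the first component `ξ₁` is strictly increasing and Lipschitz
on `[0, τ₃]`, its inverse is Lipschitz on `[ξ₁(0), α]` where `α := ξ₁(τ₃) > ξ₁(0)`, and
`g := ξ₂ ∘ ξ₁⁻¹` is Lipschitz on `[ξ₁(0), α]` with `(x, g(x))`, `x ∈ [ξ₁(0), α]`, an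
equivalent parametrization of `ξ|[0, τ₃]`. -/
theorem exists_graph_reparametrization
    (τ : ℝ) (hτ : 0 < τ) (ξ : ℝ → ℝ × ℝ) (Kξ : NNReal)
    (hξlip : LipschitzOnWith Kξ ξ (Icc 0 τ))
    (D : ℝ → ℝ × ℝ)
    (hD : ∀ s ∈ Ico (0 : ℝ) τ,
      Tendsto (fun h : ℝ => h⁻¹ • (ξ (s + h) - ξ s)) (𝓝[>] 0) (𝓝 (D s)))
    (hDlim : Tendsto D (𝓝[>] (0 : ℝ)) (𝓝 ((1 : ℝ), (0 : ℝ)))) :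
    ∃ τ₃ ∈ Ioo 0 τ,
      StrictMonoOn (fun s => (ξ s).1) (Icc 0 τ₃) ∧
      (∃ K₁ : NNReal, LipschitzOnWith K₁ (fun s => (ξ s).1) (Icc 0 τ₃)) ∧
      (ξ 0).1 < (ξ τ₃).1 ∧
      ∃ σ : ℝ → ℝ,
        (∀ s ∈ Icc (0 : ℝ) τ₃, σ ((ξ s).1) = s) ∧
        (∀ x ∈ Icc ((ξ 0).1) ((ξ τ₃).1), σ x ∈ Icc (0 : ℝ) τ₃ ∧ (ξ (σ x)).1 = x) ∧
        (∃ Kσ : NNReal, LipschitzOnWith Kσ σ (Icc ((ξ 0).1) ((ξ τ₃).1))) ∧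
        (∃ Kg : NNReal,
          LipschitzOnWith Kg (fun x => (ξ (σ x)).2) (Icc ((ξ 0).1) ((ξ τ₃).1))) ∧
        (fun x => (x, (ξ (σ x)).2)) '' Icc ((ξ 0).1) ((ξ τ₃).1) = ξ '' Icc 0 τ₃ := by
  set ξ₁ : ℝ → ℝ := fun s => (ξ s).1 with hξ₁def
  -- `ξ₁` is Lipschitz on `[0, τ]`
  have hξ₁lip : LipschitzOnWith Kξ ξ₁ (Icc 0 τ) := by
    rw [lipschitzOnWith_iff_dist_le_mul]
    intro x hx y hy
    calc dist (ξ₁ x) (ξ₁ y) ≤ dist (ξ x) (ξ y) := by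
          rw [Prod.dist_eq]; exact le_max_left _ _
      _ ≤ Kξ * dist x y := (lipschitzOnWith_iff_dist_le_mul.1 hξlip) x hx y hy
  -- right derivative of `ξ₁`
  have hderiv : ∀ x ∈ Ico (0 : ℝ) τ, HasDerivWithinAt ξ₁ ((D x).1) (Ici x) x := by
    intro x hx
    rw [hasDerivWithinAt_iff_tendsto_slope, Ici_sdiff_left]
    have h1 : Tendsto (fun h : ℝ => (h⁻¹ • (ξ (x + h) - ξ x)).1) (𝓝[>] 0) (𝓝 (D x).1) :=
      (continuous_fst.tendsto _).comp (hD x hx)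
    have h2 : Tendsto (fun y : ℝ => y - x) (𝓝[>] x) (𝓝[>] 0) := by
      apply tendsto_nhdsWithin_of_tendsto_nhds_of_eventually_within
      · have h3 : Tendsto (fun y : ℝ => y - x) (𝓝 x) (𝓝 (x - x)) :=
          (continuous_id.sub continuous_const).tendsto x
        rw [sub_self] at h3
        exact h3.mono_left nhdsWithin_le_nhds
      · filter_upwards [self_mem_nhdsWithin] with y hy
        simpa [sub_pos] using hy
    have := h1.comp h2
    apply this.congr'
    filter_upwards [self_mem_nhdsWithin] with y (hy : x < y)
    have hyx : y - x ≠ 0 := sub_ne_zero.2 (ne_of_gt hy)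
    simp only [Function.comp_apply, slope_def_field, Prod.smul_fst, Prod.fst_sub,
      add_sub_cancel, smul_eq_mul]
    rw [div_eq_inv_mul]
  -- get `u > 0` with `(D s).1 > 1/2` on `(0, u)`
  obtain ⟨u, hu0, hu⟩ : ∃ u ∈ Ioi (0 : ℝ), Ioo 0 u ⊆ {s | (1 : ℝ) / 2 < (D s).1} := by
    have h1 : Tendsto (fun s => (D s).1) (𝓝[>] (0 : ℝ)) (𝓝 1) :=
      (continuous_fst.tendsto _).comp hDlim
    have h2 : ∀ᶠ s in 𝓝[>] (0 : ℝ), (1 : ℝ) / 2 < (D s).1 :=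
      h1.eventually (eventually_gt_nhds (by norm_num))
    exact mem_nhdsGT_iff_exists_Ioo_subset.1 h2
  set τ₃ : ℝ := min u τ / 2 with hτ₃def
  have hτ₃0 : 0 < τ₃ := by
    have : 0 < min u τ := lt_min (mem_Ioi.1 hu0) hτ
    simp only [hτ₃def]; linarith
  have hτ₃τ : τ₃ < τ := by
    have : min u τ ≤ τ := min_le_right _ _
    simp only [hτ₃def]; linarith
  have hτ₃u : τ₃ < u := by
    have : min u τ ≤ u := min_le_left _ _
    simp only [hτ₃def]; linarith [mem_Ioi.1 hu0]
  -- key inequality for `0 < a`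
  have key1 : ∀ a t : ℝ, 0 < a → a ≤ t → t ≤ τ₃ → (1 / 2) * (t - a) ≤ ξ₁ t - ξ₁ a := by
    intro a t ha hat htτ₃
    have hsub : Icc a t ⊆ Icc 0 τ := fun y hy =>
      ⟨le_trans ha.le hy.1, le_trans hy.2 (by linarith)⟩
    have hf : ContinuousOn (fun y => (1 / 2 : ℝ) * y - ξ₁ y) (Icc a t) :=
      (continuousOn_const.mul continuousOn_id).sub ((hξ₁lip.continuousOn).mono hsub)
    have hf' : ∀ y ∈ Ico a t,
        HasDerivWithinAt (fun y => (1 / 2 : ℝ) * y - ξ₁ y) (1 / 2 - (D y).1) (Ici y) y := by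
      intro y hy
      have hyIco : y ∈ Ico (0 : ℝ) τ := ⟨le_trans ha.le hy.1, lt_of_lt_of_le hy.2 (by linarith)⟩
      have h1 : HasDerivWithinAt (fun y : ℝ => (1 / 2 : ℝ) * y) (1 / 2) (Ici y) y := by
        simpa using (hasDerivWithinAt_id y (Ici y)).const_mul (1 / 2 : ℝ)
      exact h1.sub (hderiv y hyIco)
    have hbound : ∀ y ∈ Ico a t, (1 / 2 : ℝ) - (D y).1 ≤ 0 := by
      intro y hy
      have : y ∈ Ioo (0 : ℝ) u := ⟨lt_of_lt_of_le ha hy.1, lt_of_lt_of_le (lt_of_lt_of_le hy.2 htτ₃) hτ₃u.le⟩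
      have := hu this
      simp only [mem_setOf_eq] at this
      linarith
    have := image_le_of_deriv_right_le_deriv_boundary hf hf'
      (B := fun _ => (1 / 2 : ℝ) * a - ξ₁ a) (B' := fun _ => 0)
      (le_refl _) continuousOn_const (fun y _ => hasDerivWithinAt_const y _ _) hbound
      (right_mem_Icc.2 hat)
    linarith
  -- key inequality, including `a = 0`
  have key : ∀ a t : ℝ, 0 ≤ a → a ≤ t → t ≤ τ₃ → (1 / 2) * (t - a) ≤ ξ₁ t - ξ₁ a := by
    intro a t ha hat htτ₃
    rcases ha.lt_or_eq with ha' | rfl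
    · exact key1 a t ha' hat htτ₃
    · rcases hat.lt_or_eq with ht' | rfl
      · apply le_of_forall_pos_le_add
        intro ε hε
        set δ : ℝ := min t (ε / (Kξ + 1)) with hδdef
        have hδ0 : 0 < δ := lt_min ht' (by positivity)
        have hδt : δ ≤ t := min_le_left _ _
        have hδε : (Kξ + 1 : ℝ) * δ ≤ ε := by
          rw [mul_comm]
          have h1 : δ ≤ ε / (Kξ + 1) := min_le_right _ _
          have h2 : (0 : ℝ) < Kξ + 1 := by positivity
          calc δ * (Kξ + 1) ≤ ε / (Kξ + 1) * (Kξ + 1) := by nlinarith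
            _ = ε := div_mul_cancel₀ _ (ne_of_gt h2)
        have h1 := key1 δ t hδ0 hδt htτ₃
        have h2 : dist (ξ₁ 0) (ξ₁ δ) ≤ Kξ * dist (0 : ℝ) δ :=
          (lipschitzOnWith_iff_dist_le_mul.1 hξ₁lip) 0 ⟨le_refl _, hτ.le⟩ δ
            ⟨hδ0.le, by linarith⟩
        rw [Real.dist_eq, Real.dist_eq] at h2
        have h3 : ξ₁ 0 - ξ₁ δ ≤ Kξ * δ := by
          have := le_abs_self (ξ₁ 0 - ξ₁ δ)
          have habs : |(0 : ℝ) - δ| = δ := by rw [zero_sub, abs_neg, abs_of_pos hδ0]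
          rw [habs] at h2
          linarith
        have hKξ : (0 : ℝ) ≤ Kξ := Kξ.coe_nonneg
        nlinarith
      · simp
  have hcont : ContinuousOn ξ₁ (Icc 0 τ₃) :=
    (hξ₁lip.continuousOn).mono (Icc_subset_Icc le_rfl hτ₃τ.le)
  have hmono : StrictMonoOn ξ₁ (Icc 0 τ₃) := by
    intro s hs t ht hst
    have := key s t hs.1 hst.le ht.2
    linarith
  have hinj : InjOn ξ₁ (Icc 0 τ₃) := hmono.injOn
  set σ : ℝ → ℝ := Function.invFunOn ξ₁ (Icc 0 τ₃) with hσdef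
  have hleft : ∀ s ∈ Icc (0 : ℝ) τ₃, σ (ξ₁ s) = s := fun s hs =>
    hinj.leftInvOn_invFunOn hs
  have hsurj : ∀ x ∈ Icc (ξ₁ 0) (ξ₁ τ₃), ∃ a ∈ Icc (0 : ℝ) τ₃, ξ₁ a = x := by
    intro x hx
    have := intermediate_value_Icc hτ₃0.le hcont hx
    exact this
  have hright : ∀ x ∈ Icc (ξ₁ 0) (ξ₁ τ₃), σ x ∈ Icc (0 : ℝ) τ₃ ∧ ξ₁ (σ x) = x := fun x hx =>
    ⟨Function.invFunOn_mem (hsurj x hx), Function.invFunOn_eq (hsurj x hx)⟩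
  -- Lipschitz bound for σ
  have hσlip : LipschitzOnWith 2 σ (Icc (ξ₁ 0) (ξ₁ τ₃)) := by
    rw [lipschitzOnWith_iff_dist_le_mul]
    intro x hx y hy
    obtain ⟨hxmem, hxeq⟩ := hright x hx
    obtain ⟨hymem, hyeq⟩ := hright y hy
    rw [Real.dist_eq, Real.dist_eq]
    rcases le_total (σ x) (σ y) with h | h
    · have := key (σ x) (σ y) hxmem.1 h hymem.2
      rw [hxeq, hyeq] at this
      rw [abs_sub_comm, abs_of_nonneg (by linarith), abs_sub_comm]
      have hxy : x ≤ y := by linarith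
      rw [abs_of_nonneg (by linarith)]
      push_cast
      linarith
    · have := key (σ y) (σ x) hymem.1 h hxmem.2
      rw [hxeq, hyeq] at this
      rw [abs_of_nonneg (by linarith)]
      have hxy : y ≤ x := by linarith
      rw [abs_of_nonneg (by linarith)]
      push_cast
      linarith
  have hσmapsto : ∀ x ∈ Icc (ξ₁ 0) (ξ₁ τ₃), σ x ∈ Icc (0 : ℝ) τ := fun x hx =>
    ⟨(hright x hx).1.1, le_trans (hright x hx).1.2 hτ₃τ.le⟩
  refine ⟨τ₃, ⟨hτ₃0, hτ₃τ⟩, hmono, ⟨Kξ, hξ₁lip.mono (Icc_subset_Icc le_rfl hτ₃τ.le)⟩,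
    hmono ⟨le_rfl, hτ₃0.le⟩ ⟨hτ₃0.le, le_rfl⟩ hτ₃0, σ, hleft, hright, ⟨2, hσlip⟩,
    ⟨Kξ * 2, ?_⟩, ?_⟩
  · rw [lipschitzOnWith_iff_dist_le_mul]
    intro x hx y hy
    calc dist (ξ (σ x)).2 (ξ (σ y)).2 ≤ dist (ξ (σ x)) (ξ (σ y)) := by
          rw [Prod.dist_eq]; exact le_max_right _ _
      _ ≤ Kξ * dist (σ x) (σ y) :=
          (lipschitzOnWith_iff_dist_le_mul.1 hξlip) _ (hσmapsto x hx) _ (hσmapsto y hy)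
      _ ≤ Kξ * (2 * dist x y) := by
          have := (lipschitzOnWith_iff_dist_le_mul.1 hσlip) x hx y hy
          have hKξ : (0 : ℝ) ≤ Kξ := Kξ.coe_nonneg
          push_cast at this ⊢
          nlinarith
      _ = ↑(Kξ * 2) * dist x y := by push_cast; ring
  · apply Subset.antisymm
    · rintro _ ⟨x, hx, rfl⟩
      refine ⟨σ x, (hright x hx).1, Prod.ext (hright x hx).2 rfl⟩
    · rintro _ ⟨s, hs, rfl⟩
      have hmem : ξ₁ s ∈ Icc (ξ₁ 0) (ξ₁ τ₃) :=
        ⟨by have := key 0 s (le_refl _) hs.1 hs.2; linarith [hs.1],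
         by have := key s τ₃ hs.1 hs.2 le_rfl; linarith [hs.2]⟩
      refine ⟨ξ₁ s, hmem, ?_⟩
      show (ξ₁ s, (ξ (σ (ξ₁ s))).2) = ξ s
      rw [hleft s hs]
end
end

section
/- Let α > 0, let φ₁, …, φ_p be Lipschitz DC functions on ℝ, and let g be a continuous function on [0, α] such that g(x) ∈ {φ₁(x), …, φ_p(x)} for every x ∈ (0, α). Then there exist convex Lipschitz functions y₁, y₂ on [0, α] with g(x) = y₁(x) − y₂(x) for all x ∈ [0, α]; in other words, g is a difference of two convex Lipschitz functions on [0, α]. -/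
open Set

/-- A function on `ℝ` is Lipschitz DC if it is a difference of two convex Lipschitz
functions. -/
def IsLipschitzDC (f : ℝ → ℝ) : Prop :=
  ∃ c₁ c₂ : ℝ → ℝ, ConvexOn ℝ univ c₁ ∧ ConvexOn ℝ univ c₂ ∧
    (∃ K₁ : NNReal, LipschitzWith K₁ c₁) ∧ (∃ K₂ : NNReal, LipschitzWith K₂ c₂) ∧
    ∀ x, f x = c₁ x - c₂ x

/-!
Adding `∑ j, c₂ j` to `g` and to every `φ i = c₁ i - c₂ i` turns the branches into convex
`K`-Lipschitz functions `ψ i`, so it suffices to treat a continuous `f` that at each point of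
`(a, b)` follows one of finitely many such `ψ i`.

Such an `f` has a right derivative `f'₊ x` at every `x ∈ [a, b)`, equal to `(ψ i)'₊ x` for each
branch that `f` follows arbitrarily close to the right of `x`. Along a branch `f'₊` increases; on
switching from `ψ j` to `ψ k` at a coincidence point `t` it drops by at most
`|(ψ j)'₊ t - (ψ k)'₊ t|`. For a fixed pair these gaps, summed over any finite set of coincidence
points, stay below `6 K`: two convex functions that meet at `s < t` satisfy
`(ψ j)'₊ s ≤ (ψ k)'₊ t`, so each gap is paid for by the growth of both right derivatives since the
previous coincidence point. Hence the supremum `N x` of these sums over coincidence points `≤ x`,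
added over all pairs, is monotone and bounded, `f'₊ + N` is monotone, and
`f = (f a + ∫ (f'₊ + N)) - ∫ N`.
-/

open Filter Topology NNReal MeasureTheory

theorem Icc_subset_of_forall_Ico_subset_of_mem_nhdsGT {α : Type*}
    [ConditionallyCompleteLinearOrder α] [TopologicalSpace α] [OrderTopology α]
    [DenselyOrdered α] {a b : α} {s : Set α} (ha : a ∈ s)
    (hleft : ∀ t ∈ Ioc a b, Ico a t ⊆ s → t ∈ s)
    (hright : ∀ t ∈ Ico a b, t ∈ s → s ∈ 𝓝[>] t) :
    Icc a b ⊆ s := by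
  rcases lt_or_ge b a with hba | hab
  · simp [Icc_eq_empty_of_lt hba]
  set A := {t ∈ Icc a b | Icc a t ⊆ s}
  have haA : a ∈ A := ⟨left_mem_Icc.2 hab, by simpa⟩
  have hA : BddAbove A := ⟨b, fun t ht => ht.1.2⟩
  set c := sSup A
  have hc : c ∈ Icc a b := ⟨le_csSup hA haA, csSup_le ⟨a, haA⟩ fun t ht => ht.1.2⟩
  have hIco : Ico a c ⊆ s := fun r hr => by
    obtain ⟨t, htA, hrt⟩ := (lt_csSup_iff hA ⟨a, haA⟩).1 hr.2
    exact htA.2 ⟨hr.1, hrt.le⟩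
  have hcs : c ∈ s := by
    rcases hc.1.eq_or_lt with hac | hac
    · exact hac ▸ ha
    · exact hleft c ⟨hac, hc.2⟩ hIco
  have hIcc : Icc a c ⊆ s := fun r hr =>
    hr.2.eq_or_lt.elim (· ▸ hcs) fun h => hIco ⟨hr.1, h⟩
  rcases hc.2.eq_or_lt with hcb | hcb
  · exact hcb ▸ hIcc
  obtain ⟨m, hcm, hm⟩ := (mem_nhdsGT_iff_exists_Ioo_subset' hcb).1 (hright c ⟨hc.1, hcb⟩ hcs)
  obtain ⟨t, hct, htm⟩ := exists_between (lt_min hcm hcb)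
  have htA : t ∈ A := by
    refine ⟨⟨hc.1.trans hct.le, htm.le.trans (min_le_right _ _)⟩, fun r hr => ?_⟩
    rcases le_or_gt r c with hrc | hrc
    · exact hIcc ⟨hr.1, hrc⟩
    · exact hm ⟨hrc, hr.2.trans_lt (htm.trans_le (min_le_left _ _))⟩
  exact absurd (le_csSup hA htA) (not_le.2 hct)

theorem eventually_forall_eq_imp_eq_s9 {X Y ι : Type*} [TopologicalSpace X] [TopologicalSpace Y]
    [T2Space Y] [Finite ι] {f : X → Y} {ψ : ι → X → Y} {s : Set X} {x : X}
    (hf : ContinuousWithinAt f s x) (hψ : ∀ i, ContinuousAt (ψ i) x) :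
    ∀ᶠ t in 𝓝[s] x, ∀ i, f t = ψ i t → f x = ψ i x := by
  refine eventually_all.2 fun i => ?_
  by_cases h : f x = ψ i x
  · exact Eventually.of_forall fun _ _ => h
  · filter_upwards [(hf.prodMk (hψ i).continuousWithinAt).eventually
      (isClosed_diagonal.isOpen_compl.mem_nhds h)] with t ht heq
    exact absurd heq ht

theorem LipschitzWith.abs_slope_le {f : ℝ → ℝ} {K : ℝ≥0} (hf : LipschitzWith K f) (x y : ℝ) :
    |slope f x y| ≤ K := by
  rw [slope_def_field, abs_div]
  rcases eq_or_ne y x with rfl | h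
  · simp
  · rw [div_le_iff₀ (abs_pos.2 (sub_ne_zero.2 h))]
    simpa [Real.dist_eq] using hf.dist_le_mul y x

namespace ConvexOn

variable {ψ χ : ℝ → ℝ} {x y : ℝ}

theorem rightDeriv_le_slope_univ (hψ : ConvexOn ℝ univ ψ) (hxy : x < y) :
    derivWithin ψ (Ioi x) x ≤ slope ψ x y :=
  hψ.rightDeriv_le_slope_of_mem_interior (by simp) trivial hxy

theorem slope_le_rightDeriv_univ (hψ : ConvexOn ℝ univ ψ) (hxy : x < y) :
    slope ψ x y ≤ derivWithin ψ (Ioi y) y :=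
  (hψ.slope_le_leftDeriv_of_mem_interior trivial (by simp) hxy).trans
    (hψ.leftDeriv_le_rightDeriv_of_mem_interior (by simp))

theorem monotone_rightDeriv_univ (hψ : ConvexOn ℝ univ ψ) :
    Monotone fun x => derivWithin ψ (Ioi x) x :=
  fun _ _ h => hψ.monotoneOn_rightDeriv (by simp) (by simp) h

theorem tendsto_slope_rightDeriv_univ (hψ : ConvexOn ℝ univ ψ) (x : ℝ) :
    Tendsto (slope ψ x) (𝓝[>] x) (𝓝 (derivWithin ψ (Ioi x) x)) :=
  (hasDerivWithinAt_iff_tendsto_slope' self_notMem_Ioi).1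
    (hψ.hasDerivWithinAt_rightDeriv_of_mem_interior (by simp))

theorem abs_rightDeriv_le (hψ : ConvexOn ℝ univ ψ) {K : ℝ≥0} (hK : LipschitzWith K ψ) (x : ℝ) :
    |derivWithin ψ (Ioi x) x| ≤ K :=
  abs_le.2 ⟨(neg_le_of_abs_le (hK.abs_slope_le (x - 1) x)).trans
      (hψ.slope_le_rightDeriv_univ (sub_one_lt x)),
    (hψ.rightDeriv_le_slope_univ (lt_add_one x)).trans (le_of_abs_le (hK.abs_slope_le x (x + 1)))⟩

theorem rightDeriv_le_rightDeriv_of_eq_of_eq (hψ : ConvexOn ℝ univ ψ) (hχ : ConvexOn ℝ univ χ)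
    (hxy : x < y) (hx : ψ x = χ x) (hy : ψ y = χ y) :
    derivWithin ψ (Ioi x) x ≤ derivWithin χ (Ioi y) y :=
  calc derivWithin ψ (Ioi x) x ≤ slope ψ x y := hψ.rightDeriv_le_slope_univ hxy
    _ = slope χ x y := by simp only [slope_def_field, hx, hy]
    _ ≤ derivWithin χ (Ioi y) y := hχ.slope_le_rightDeriv_univ hxy

end ConvexOn

theorem convexOn_sum {ι : Type*} {s : Set ℝ} (hs : Convex ℝ s) (t : Finset ι)
    {f : ι → ℝ → ℝ} (hf : ∀ i ∈ t, ConvexOn ℝ s (f i)) :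
    ConvexOn ℝ s fun x => ∑ i ∈ t, f i x := by
  simp_rw [← Finset.sum_apply]
  exact Finset.sum_induction f (ConvexOn ℝ s) (fun _ _ => ConvexOn.add)
    (convexOn_const 0 hs) hf

theorem LipschitzWith.sum {ι : Type*} (t : Finset ι) {f : ι → ℝ → ℝ} {K : ι → ℝ≥0}
    (hf : ∀ i ∈ t, LipschitzWith (K i) (f i)) :
    LipschitzWith (∑ i ∈ t, K i) fun x => ∑ i ∈ t, f i x := by
  classical
  induction t using Finset.induction_on with
  | empty => simp
  | insert i t hi ih =>
    simp only [Finset.sum_insert hi]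
    exact (hf i (Finset.mem_insert_self i t)).add
      (ih fun j hj => hf j (Finset.mem_insert_of_mem hj))

theorem exists_lipschitzWith_forall_of_finite {ι : Type*} [Finite ι] {ψ : ι → ℝ → ℝ}
    (hψ : ∀ i, ∃ K : ℝ≥0, LipschitzWith K (ψ i)) : ∃ K : ℝ≥0, ∀ i, LipschitzWith K (ψ i) := by
  have := Fintype.ofFinite ι
  choose K hK using hψ
  exact ⟨∑ i, K i, fun i => (hK i).weaken (Finset.single_le_sum (fun _ _ => zero_le)
    (Finset.mem_univ i))⟩

noncomputable def rightDerivGap (ψ χ : ℝ → ℝ) (t : ℝ) : ℝ :=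
  |derivWithin ψ (Ioi t) t - derivWithin χ (Ioi t) t|

noncomputable def coincidenceJumpSum (ψ χ : ℝ → ℝ) (x : ℝ) : ℝ :=
  ⨆ s : {s : Finset ℝ // ∀ t ∈ s, t ≤ x ∧ ψ t = χ t}, ∑ t ∈ s.1, rightDerivGap ψ χ t

section CoincidenceJumpSum

variable {ψ χ : ℝ → ℝ} {K : ℝ≥0}
  (hψ : ConvexOn ℝ univ ψ) (hχ : ConvexOn ℝ univ χ) (hψK : LipschitzWith K ψ)
  (hχK : LipschitzWith K χ)

theorem coincidenceJumpSum_nonneg (x : ℝ) : 0 ≤ coincidenceJumpSum ψ χ x :=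
  Real.iSup_nonneg fun _ => Finset.sum_nonneg fun _ _ => abs_nonneg _

include hψ hχ

theorem rightDerivGap_le_of_eq_of_eq {x y : ℝ} (hxy : x < y) (hx : ψ x = χ x) (hy : ψ y = χ y) :
    rightDerivGap ψ χ y ≤ (derivWithin ψ (Ioi y) y - derivWithin ψ (Ioi x) x) +
      (derivWithin χ (Ioi y) y - derivWithin χ (Ioi x) x) := by
  have h₁ := hψ.rightDeriv_le_rightDeriv_of_eq_of_eq hχ hxy hx hy
  have h₂ := hχ.rightDeriv_le_rightDeriv_of_eq_of_eq hψ hxy hx.symm hy.symm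
  have h₃ := hψ.monotone_rightDeriv_univ hxy.le
  have h₄ := hχ.monotone_rightDeriv_univ hxy.le
  exact abs_sub_le_iff.2 ⟨by linarith, by linarith⟩

include hψK hχK

/-- Singling out the top point `y` makes the induction go through: its gap is paid for by the
growth of both right derivatives since the largest point of `s`. -/
theorem sum_rightDerivGap_add_le (s : Finset ℝ) {y : ℝ} (hs : ∀ t ∈ s, t < y ∧ ψ t = χ t)
    (hy : ψ y = χ y) :
    ∑ t ∈ s, rightDerivGap ψ χ t + rightDerivGap ψ χ y ≤
      derivWithin ψ (Ioi y) y + derivWithin χ (Ioi y) y + 4 * K := by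
  classical
  induction s using Finset.induction_on_max generalizing y with
  | empty =>
    have h₁ := abs_le.1 (hψ.abs_rightDeriv_le hψK y)
    have h₂ := abs_le.1 (hχ.abs_rightDeriv_le hχK y)
    simp only [Finset.sum_empty, zero_add, rightDerivGap]
    exact abs_sub_le_iff.2 ⟨by linarith, by linarith⟩
  | insert a s has ih =>
    have ha := hs a (Finset.mem_insert_self a s)
    rw [Finset.sum_insert fun h => (has a h).false]
    have := ih (fun t ht => ⟨has t ht, (hs t (Finset.mem_insert_of_mem ht)).2⟩) ha.2
    have := rightDerivGap_le_of_eq_of_eq hψ hχ ha.1 ha.2 hy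
    linarith

theorem sum_rightDerivGap_le (s : Finset ℝ) (hs : ∀ t ∈ s, ψ t = χ t) :
    ∑ t ∈ s, rightDerivGap ψ χ t ≤ 6 * K := by
  classical
  induction s using Finset.induction_on_max with
  | empty => simp
  | insert a s has _ =>
    rw [Finset.sum_insert fun h => (has a h).false, add_comm]
    have := sum_rightDerivGap_add_le hψ hχ hψK hχK s
      (fun t ht => ⟨has t ht, hs t (Finset.mem_insert_of_mem ht)⟩)
      (hs a (Finset.mem_insert_self a s))
    have h₁ := abs_le.1 (hψ.abs_rightDeriv_le hψK a)
    have h₂ := abs_le.1 (hχ.abs_rightDeriv_le hχK a)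
    linarith

theorem bddAbove_coincidenceJumpSum (x : ℝ) :
    BddAbove (range fun s : {s : Finset ℝ // ∀ t ∈ s, t ≤ x ∧ ψ t = χ t} =>
      ∑ t ∈ s.1, rightDerivGap ψ χ t) := by
  refine ⟨6 * K, ?_⟩
  rintro _ ⟨s, rfl⟩
  exact sum_rightDerivGap_le hψ hχ hψK hχK s.1 fun t ht => (s.2 t ht).2

theorem monotone_coincidenceJumpSum : Monotone (coincidenceJumpSum ψ χ) := fun _ y hxy =>
  Real.iSup_le (fun s => le_ciSup (bddAbove_coincidenceJumpSum hψ hχ hψK hχK y)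
    ⟨s.1, fun t ht => ⟨(s.2 t ht).1.trans hxy, (s.2 t ht).2⟩⟩) (coincidenceJumpSum_nonneg y)

theorem coincidenceJumpSum_add_rightDerivGap_le {x t : ℝ} (hxt : x < t) (ht : ψ t = χ t) :
    coincidenceJumpSum ψ χ x + rightDerivGap ψ χ t ≤ coincidenceJumpSum ψ χ t := by
  have hbdd := bddAbove_coincidenceJumpSum hψ hχ hψK hχK t
  have hinsert : ∀ s : {s : Finset ℝ // ∀ r ∈ s, r ≤ x ∧ ψ r = χ r},
      ∑ r ∈ s.1, rightDerivGap ψ χ r + rightDerivGap ψ χ t ≤ coincidenceJumpSum ψ χ t := by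
    intro s
    have hts : t ∉ s.1 := fun h => ((s.2 t h).1.trans_lt hxt).false
    rw [add_comm, ← Finset.sum_insert hts]
    refine le_ciSup hbdd ⟨insert t s.1, fun r hr => ?_⟩
    rcases Finset.mem_insert.1 hr with rfl | hr
    · exact ⟨le_rfl, ht⟩
    · exact ⟨(s.2 r hr).1.trans hxt.le, (s.2 r hr).2⟩
  rw [← le_sub_iff_add_le]
  refine Real.iSup_le (fun s => le_sub_iff_add_le.2 (hinsert s)) ?_
  simpa using hinsert ⟨∅, by simp⟩

end CoincidenceJumpSum

noncomputable def coincidenceJumpMajorant {ι : Type*} [Fintype ι] (ψ : ι → ℝ → ℝ) (x : ℝ) : ℝ :=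
  ∑ p : ι × ι, coincidenceJumpSum (ψ p.1) (ψ p.2) x

section CoincidenceJumpMajorant

variable {ι : Type*} [Fintype ι] {ψ : ι → ℝ → ℝ} {K : ℝ≥0}
  (hψ : ∀ i, ConvexOn ℝ univ (ψ i)) (hψK : ∀ i, LipschitzWith K (ψ i))

include hψ hψK

theorem monotone_coincidenceJumpMajorant : Monotone (coincidenceJumpMajorant ψ) :=
  fun _ _ hxy => Finset.sum_le_sum fun p _ =>
    monotone_coincidenceJumpSum (hψ p.1) (hψ p.2) (hψK p.1) (hψK p.2) hxy

theorem rightDeriv_sub_rightDeriv_le_coincidenceJumpMajorant_sub {j k : ι} {s t : ℝ}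
    (hst : s < t) (ht : ψ j t = ψ k t) :
    derivWithin (ψ j) (Ioi s) s - derivWithin (ψ k) (Ioi t) t ≤
      coincidenceJumpMajorant ψ t - coincidenceJumpMajorant ψ s := by
  have hmono := (hψ j).monotone_rightDeriv_univ hst.le
  have hgap := le_abs_self (derivWithin (ψ j) (Ioi t) t - derivWithin (ψ k) (Ioi t) t)
  have hjump := coincidenceJumpSum_add_rightDerivGap_le (hψ j) (hψ k) (hψK j) (hψK k) hst ht
  have hsum : coincidenceJumpSum (ψ j) (ψ k) t - coincidenceJumpSum (ψ j) (ψ k) s ≤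
      coincidenceJumpMajorant ψ t - coincidenceJumpMajorant ψ s := by
    rw [coincidenceJumpMajorant, coincidenceJumpMajorant, ← Finset.sum_sub_distrib]
    exact Finset.single_le_sum (f := fun p : ι × ι =>
        coincidenceJumpSum (ψ p.1) (ψ p.2) t - coincidenceJumpSum (ψ p.1) (ψ p.2) s)
      (fun p _ => sub_nonneg.2
        (monotone_coincidenceJumpSum (hψ p.1) (hψ p.2) (hψK p.1) (hψK p.2) hst.le))
      (Finset.mem_univ (j, k))
  rw [rightDerivGap] at hjump
  linarith

end CoincidenceJumpMajorant

theorem frequently_eq_of_frequently_lt_of_frequently_gt {g : ℝ → ℝ} {x c d : ℝ} (hxc : x < c)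
    (hg : ContinuousOn g (Ioo x c)) (hlt : ∃ᶠ t in 𝓝[>] x, g t < d)
    (hgt : ∃ᶠ t in 𝓝[>] x, d < g t) : ∃ᶠ t in 𝓝[>] x, g t = d := by
  rw [frequently_iff]
  intro U hU
  obtain ⟨e, hxe, he⟩ :=
    (mem_nhdsGT_iff_exists_Ioo_subset' hxc).1 (inter_mem hU (Ioo_mem_nhdsGT hxc))
  obtain ⟨t₁, ht₁, ht₁e⟩ := (hlt.and_eventually (Ioo_mem_nhdsGT hxe)).exists
  obtain ⟨t₂, ht₂, ht₂e⟩ := (hgt.and_eventually (Ioo_mem_nhdsGT hxe)).exists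
  obtain ⟨t, ht, hgt⟩ := isPreconnected_Ioo.intermediate_value ht₁e ht₂e
    (hg.mono fun r hr => (he hr).2) ⟨ht₁.le, ht₂.le⟩
  exact ⟨t, (he ht).1, hgt⟩

/-- Two limits `v j ≠ v k` of branches that `g` follows frequently are impossible: by the
intermediate value theorem `g` would frequently take a value strictly between them that is no
`v l`. -/
theorem tendsto_of_frequently_eq_of_eventually_exists_eq {ι : Type*} [Finite ι] {x c : ℝ}
    (hxc : x < c) {g : ℝ → ℝ} (hg : ContinuousOn g (Ioo x c)) {h : ι → ℝ → ℝ} {v : ι → ℝ}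
    (hh : ∀ i, Tendsto (h i) (𝓝[>] x) (𝓝 (v i))) (hsel : ∀ᶠ t in 𝓝[>] x, ∃ i, g t = h i t)
    {i : ι} (hi : ∃ᶠ t in 𝓝[>] x, g t = h i t) : Tendsto g (𝓝[>] x) (𝓝 (v i)) := by
  have hle : ∀ j k, (∃ᶠ t in 𝓝[>] x, g t = h j t) → (∃ᶠ t in 𝓝[>] x, g t = h k t) →
      v j ≤ v k := by
    intro j k hj hk
    by_contra! hkj
    obtain ⟨d, ⟨hkd, hdj⟩, hd⟩ := ((Ioo_infinite hkj).sdiff (finite_range v)).nonempty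
    have hlt : ∃ᶠ t in 𝓝[>] x, g t < d :=
      (hk.and_eventually ((hh k).eventually (eventually_lt_nhds hkd))).mono
        fun t ht => ht.1 ▸ ht.2
    have hgt : ∃ᶠ t in 𝓝[>] x, d < g t :=
      (hj.and_eventually ((hh j).eventually (eventually_gt_nhds hdj))).mono
        fun t ht => ht.1 ▸ ht.2
    obtain ⟨l, hl⟩ := frequently_exists.1
      (((frequently_eq_of_frequently_lt_of_frequently_gt hxc hg hlt hgt).and_eventually
        hsel).mono fun t ht => ht.2.imp fun l hl => hl ▸ ht.1)
    exact hd ⟨l, isClosed_singleton.mem_of_frequently_of_tendsto hl (hh l)⟩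
  by_contra hne
  obtain ⟨U, hU, hfreq⟩ := not_tendsto_iff_exists_frequently_notMem.1 hne
  obtain ⟨k, hk⟩ : ∃ k, ∃ᶠ t in 𝓝[>] x, g t = h k t ∧ g t ∉ U := frequently_exists.1
    ((hfreq.and_eventually hsel).mono fun t ht => ht.2.imp fun k hk => ⟨hk, ht.1⟩)
  have hk' : ∃ᶠ t in 𝓝[>] x, g t = h k t := hk.mono fun _ h => h.1
  have hvk : v k = v i := le_antisymm (hle k i hk' hi) (hle i k hi hk')
  obtain ⟨t, ⟨hgt, hU'⟩, hkt⟩ := (hk.and_eventually ((hh k).eventually (hvk ▸ hU))).exists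
  exact hU' (hgt ▸ hkt)

section Selection

variable {ι : Type*} [Fintype ι] {ψ : ι → ℝ → ℝ} {K : ℝ≥0} {f : ℝ → ℝ} {a b : ℝ}
  (hψ : ∀ i, ConvexOn ℝ univ (ψ i)) (hψc : ∀ i, Continuous (ψ i))
  (hψK : ∀ i, LipschitzWith K (ψ i)) (hf : ContinuousOn f (Icc a b))
  (hsel : ∀ x ∈ Ioo a b, ∃ i, f x = ψ i x)

include hψ hψc hf hsel in
theorem exists_hasDerivWithinAt_Ioi_rightDeriv {x : ℝ} (hx : x ∈ Ico a b) :
    ∃ i, f x = ψ i x ∧ (∃ᶠ t in 𝓝[>] x, f t = ψ i t) ∧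
      HasDerivWithinAt f (derivWithin (ψ i) (Ioi x) x) (Ioi x) x := by
  have hnear : ∀ᶠ t in 𝓝[>] x, ∃ k, f t = ψ k t ∧ f x = ψ k x := by
    filter_upwards [nhdsWithin_le_of_mem (Icc_mem_nhdsGT_of_mem hx)
      (eventually_forall_eq_imp_eq_s9 (hf.continuousWithinAt (Ico_subset_Icc_self hx))
        fun k => (hψc k).continuousAt),
      Ioo_mem_nhdsGT hx.2] with t hcontact ht
    obtain ⟨k, hk⟩ := hsel t ⟨hx.1.trans_lt ht.1, ht.2⟩
    exact ⟨k, hk, hcontact k hk⟩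
  obtain ⟨i, hi⟩ := frequently_exists.1 hnear.frequently
  have hslope : ∀ k t, f t = ψ k t → f x = ψ k x → slope f x t = slope (ψ k) x t := by
    intro k t ht hx
    simp only [slope_def_field, ht, hx]
  have hcont : ContinuousOn (slope f x) (Ioo x b) := by
    refine ContinuousOn.congr ?_ fun t _ => slope_def_field f x t
    exact ((hf.mono fun t ht => ⟨hx.1.trans ht.1.le, ht.2.le⟩).sub continuousOn_const).div
      (continuousOn_id.sub continuousOn_const) fun t ht => sub_ne_zero.2 ht.1.ne'
  refine ⟨i, hi.exists.choose_spec.2, hi.mono fun _ h => h.1, ?_⟩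
  rw [hasDerivWithinAt_iff_tendsto_slope' self_notMem_Ioi]
  exact tendsto_of_frequently_eq_of_eventually_exists_eq hx.2 hcont
    (fun k => (hψ k).tendsto_slope_rightDeriv_univ x)
    (hnear.mono fun t ⟨k, hk⟩ => ⟨k, hslope k t hk.1 hk.2⟩)
    (hi.mono fun t h => hslope i t h.1 h.2)

include hψ hψK hf hsel in
/-- Continuous induction along `[u, y]`, where `u > x` is a point at which `f` follows `ψ i`:
near any point `t`, every branch followed by `f` also passes through `(t, f t)`, so the estimate
propagates through `t` by switching branches there. -/
theorem rightDeriv_sub_rightDeriv_le_coincidenceJumpMajorant_sub_of_frequently {i j : ι}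
    {x y : ℝ} (hx : a ≤ x) (hxy : x < y) (hyb : y < b) (hi : ∃ᶠ t in 𝓝[>] x, f t = ψ i t)
    (hj : f y = ψ j y) :
    derivWithin (ψ i) (Ioi x) x - derivWithin (ψ j) (Ioi y) y ≤
      coincidenceJumpMajorant ψ y - coincidenceJumpMajorant ψ x := by
  set N := coincidenceJumpMajorant ψ
  have hψc i := (hψK i).continuous
  obtain ⟨u, hu, hxu⟩ := (hi.and_eventually (Ioo_mem_nhdsGT hxy)).exists
  set P : Set ℝ := {t | ∀ k, f t = ψ k t →
    derivWithin (ψ i) (Ioi x) x - derivWithin (ψ k) (Ioi t) t ≤ N t - N x}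
  have hpropagate {s t : ℝ} {k : ι} (hst : s < t) (hs : s ∈ P) (hks : f s = ψ k s)
      (hkt : f t = ψ k t) : t ∈ P := by
    intro l hl
    have := hs k hks
    have := rightDeriv_sub_rightDeriv_le_coincidenceJumpMajorant_sub hψ hψK hst
      (hkt.symm.trans hl)
    linarith
  have hab : Icc u y ⊆ Ioo a b := fun t ht =>
    ⟨hx.trans_lt (hxu.1.trans_le ht.1), ht.2.trans_lt hyb⟩
  have hcontact : ∀ t ∈ Icc u y, ∀ᶠ s in 𝓝[Icc a b] t, ∀ k, f s = ψ k s → f t = ψ k t :=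
    fun t ht => eventually_forall_eq_imp_eq_s9 (hf.continuousWithinAt (Ioo_subset_Icc_self (hab ht)))
      fun k => (hψc k).continuousAt
  have hP : Icc u y ⊆ P := by
    refine Icc_subset_of_forall_Ico_subset_of_mem_nhdsGT (fun k hk => ?_) (fun t ht hIco => ?_)
      fun t ht htP => ?_
    · exact rightDeriv_sub_rightDeriv_le_coincidenceJumpMajorant_sub hψ hψK hxu.1
        (hu.symm.trans hk)
    · have htab := hab (Ioc_subset_Icc_self ht)
      have hleft : ∀ᶠ s in 𝓝[<] t, ∀ k, f s = ψ k s → f t = ψ k t :=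
        nhdsWithin_le_of_mem (Icc_mem_nhdsLT_of_mem ⟨htab.1, htab.2.le⟩)
          (hcontact t (Ioc_subset_Icc_self ht))
      obtain ⟨s, hs, hst⟩ := (hleft.and (Ioo_mem_nhdsLT ht.1)).exists
      obtain ⟨k, hk⟩ := hsel s (hab ⟨hst.1.le, hst.2.le.trans ht.2⟩)
      exact hpropagate hst.2 (hIco ⟨hst.1.le, hst.2⟩) hk (hs k hk)
    · have htab := hab (Ico_subset_Icc_self ht)
      filter_upwards [nhdsWithin_le_of_mem (Icc_mem_nhdsGT_of_mem ⟨htab.1.le, htab.2⟩)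
        (hcontact t (Ico_subset_Icc_self ht)), self_mem_nhdsWithin] with s hs hts k hk
      exact hpropagate hts htP (hs k hk) hk k hk
  exact hP ⟨hxu.2.le, le_rfl⟩ j hj

end Selection

section IntervalIntegral

variable {G : ℝ → ℝ} {a b : ℝ}

theorem intervalIntegrable_of_monotoneOn_Icc (hG : MonotoneOn G (Icc a b)) {x y : ℝ}
    (hx : x ∈ Icc a b) (hy : y ∈ Icc a b) : IntervalIntegrable G volume x y :=
  (hG.mono (uIcc_subset_Icc hx hy)).intervalIntegrable

theorem convexOn_integral_of_monotoneOn (hG : MonotoneOn G (Icc a b)) :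
    ConvexOn ℝ (Icc a b) fun X => ∫ s in a..X, G s := by
  refine convexOn_of_slope_mono_adjacent (convex_Icc a b) fun {x y z} hx hz hxy hyz => ?_
  have hy : y ∈ Icc a b := ⟨hx.1.trans hxy.le, hyz.le.trans hz.2⟩
  have ha : a ∈ Icc a b := left_mem_Icc.2 (hx.1.trans hx.2)
  have hint {x y : ℝ} (hx : x ∈ Icc a b) (hy : y ∈ Icc a b) :=
    intervalIntegrable_of_monotoneOn_Icc hG hx hy
  rw [intervalIntegral.integral_interval_sub_left (hint ha hy) (hint ha hx),
    intervalIntegral.integral_interval_sub_left (hint ha hz) (hint ha hy)]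
  have hxy' : ∫ s in x..y, G s ≤ (y - x) * G y := by
    simpa using intervalIntegral.integral_mono_on hxy.le (hint hx hy) intervalIntegrable_const
      fun s hs => hG ⟨hx.1.trans hs.1, hs.2.trans hy.2⟩ hy hs.2
  have hyz' : (z - y) * G y ≤ ∫ s in y..z, G s := by
    simpa using intervalIntegral.integral_mono_on hyz.le intervalIntegrable_const (hint hy hz)
      fun s hs => hG hy ⟨hy.1.trans hs.1, hs.2.trans hz.2⟩ hs.1
  calc (∫ s in x..y, G s) / (y - x) ≤ G y := (div_le_iff₀ (sub_pos.2 hxy)).2 (by linarith)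
    _ ≤ (∫ s in y..z, G s) / (z - y) := (le_div_iff₀ (sub_pos.2 hyz)).2 (by linarith)

theorem exists_lipschitzOnWith_integral_of_monotoneOn (hG : MonotoneOn G (Icc a b)) :
    ∃ K : ℝ≥0, LipschitzOnWith K (fun X => ∫ s in a..X, G s) (Icc a b) := by
  rcases lt_or_ge b a with hba | hab
  · exact ⟨0, by simp [Icc_eq_empty_of_lt hba]⟩
  have ha : a ∈ Icc a b := left_mem_Icc.2 hab
  have hb : b ∈ Icc a b := right_mem_Icc.2 hab
  refine ⟨⟨max |G a| |G b|, by positivity⟩, LipschitzOnWith.of_dist_le_mul fun x hx y hy => ?_⟩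
  have hint {x y : ℝ} (hx : x ∈ Icc a b) (hy : y ∈ Icc a b) :=
    intervalIntegrable_of_monotoneOn_Icc hG hx hy
  rw [Real.dist_eq, Real.dist_eq, intervalIntegral.integral_interval_sub_left (hint ha hx)
    (hint ha hy), ← Real.norm_eq_abs]
  refine intervalIntegral.norm_integral_le_of_norm_le_const fun s hs => ?_
  have hs' : s ∈ Icc a b := uIcc_subset_Icc hy hx (uIoc_subset_uIcc hs)
  exact abs_le_max_abs_abs (hG ha hs' hs'.1) (hG hs' hb hs'.2)

end IntervalIntegral

def IsLipschitzDCOn (f : ℝ → ℝ) (s : Set ℝ) : Prop :=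
  ∃ y₁ y₂ : ℝ → ℝ, ConvexOn ℝ s y₁ ∧ ConvexOn ℝ s y₂ ∧
    (∃ K₁ : ℝ≥0, LipschitzOnWith K₁ y₁ s) ∧ (∃ K₂ : ℝ≥0, LipschitzOnWith K₂ y₂ s) ∧
    ∀ x ∈ s, f x = y₁ x - y₂ x

theorem IsLipschitzDCOn.sub {f F : ℝ → ℝ} {s : Set ℝ} {K : ℝ≥0} (hf : IsLipschitzDCOn f s)
    (hF : ConvexOn ℝ s F) (hFK : LipschitzOnWith K F s) :
    IsLipschitzDCOn (fun x => f x - F x) s := by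
  obtain ⟨y₁, y₂, hy₁, hy₂, hK₁, ⟨K₂, hK₂⟩, hfy⟩ := hf
  exact ⟨y₁, fun x => y₂ x + F x, hy₁, hy₂.add hF, hK₁, ⟨K₂ + K, hK₂.add hFK⟩,
    fun x hx => by
      show f x - F x = y₁ x - (y₂ x + F x)
      rw [hfy x hx]
      ring⟩

theorem isLipschitzDCOn_Icc_of_hasDerivWithinAt_Ioi {f M N : ℝ → ℝ} {a b : ℝ}
    (hf : ContinuousOn f (Icc a b)) (hM : MonotoneOn M (Icc a b)) (hN : MonotoneOn N (Icc a b))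
    (hderiv : ∀ x ∈ Ioo a b, HasDerivWithinAt f (M x - N x) (Ioi x) x) :
    IsLipschitzDCOn f (Icc a b) := by
  obtain ⟨K₁, hK₁⟩ := exists_lipschitzOnWith_integral_of_monotoneOn hM
  obtain ⟨K₂, hK₂⟩ := exists_lipschitzOnWith_integral_of_monotoneOn hN
  refine ⟨fun X => f a + ∫ s in a..X, M s, fun X => ∫ s in a..X, N s,
    (convexOn_const (f a) (convex_Icc a b)).add (convexOn_integral_of_monotoneOn hM),
    convexOn_integral_of_monotoneOn hN,
    ⟨0 + K₁, (LipschitzWith.const (f a)).lipschitzOnWith.add hK₁⟩, ⟨K₂, hK₂⟩, fun X hX => ?_⟩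
  have ha : a ∈ Icc a b := ⟨le_rfl, hX.1.trans hX.2⟩
  have hMint := intervalIntegrable_of_monotoneOn_Icc hM ha hX
  have hNint := intervalIntegrable_of_monotoneOn_Icc hN ha hX
  have hFTC := intervalIntegral.integral_eq_sub_of_hasDeriv_right_of_le hX.1
    (hf.mono (Icc_subset_Icc_right hX.2)) (fun x hx => hderiv x ⟨hx.1, hx.2.trans_le hX.2⟩)
    (hMint.sub hNint)
  rw [intervalIntegral.integral_sub hMint hNint] at hFTC
  show f X = f a + (∫ s in a..X, M s) - ∫ s in a..X, N s
  linarith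

theorem isLipschitzDCOn_Icc_of_forall_mem_Ioo_exists_eq {ι : Type*} [Finite ι]
    {ψ : ι → ℝ → ℝ} {f : ℝ → ℝ} {a b : ℝ} (hψ : ∀ i, ConvexOn ℝ univ (ψ i))
    (hψK : ∀ i, ∃ K : ℝ≥0, LipschitzWith K (ψ i)) (hf : ContinuousOn f (Icc a b))
    (hsel : ∀ x ∈ Ioo a b, ∃ i, f x = ψ i x) :
    IsLipschitzDCOn f (Icc a b) := by
  have := Fintype.ofFinite ι
  obtain ⟨K, hK⟩ := exists_lipschitzWith_forall_of_finite hψK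
  set N := coincidenceJumpMajorant ψ
  -- `derivWithin f (Ioi b) b` depends on `f` beyond `b`; the bound `K` keeps `D + N` monotone.
  set D : ℝ → ℝ := fun x => if x < b then derivWithin f (Ioi x) x else K
  have hD : ∀ x ∈ Ico a b, ∃ i, f x = ψ i x ∧ (∃ᶠ t in 𝓝[>] x, f t = ψ i t) ∧
      HasDerivWithinAt f (D x) (Ioi x) x ∧ D x = derivWithin (ψ i) (Ioi x) x := by
    intro x hx
    obtain ⟨i, hix, hfreq, hderiv⟩ :=
      exists_hasDerivWithinAt_Ioi_rightDeriv hψ (fun i => (hK i).continuous) hf hsel hx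
    have hDx : D x = derivWithin (ψ i) (Ioi x) x := by
      simp only [D, if_pos hx.2, hderiv.derivWithin (uniqueDiffWithinAt_Ioi x)]
    exact ⟨i, hix, hfreq, hDx ▸ hderiv, hDx⟩
  have hN : Monotone N := monotone_coincidenceJumpMajorant hψ hK
  have hM : MonotoneOn (D + N) (Icc a b) := by
    intro x hx y hy hxy
    rcases hxy.eq_or_lt with rfl | hxy
    · exact le_rfl
    obtain ⟨i, -, hi, -, hDx⟩ := hD x ⟨hx.1, hxy.trans_le hy.2⟩
    have hNxy := hN hxy.le
    simp only [Pi.add_apply]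
    rcases hy.2.eq_or_lt with rfl | hyb
    · have hDy : D y = K := if_neg (lt_irrefl y)
      have := le_of_abs_le ((hψ i).abs_rightDeriv_le (hK i) x)
      linarith
    · obtain ⟨j, hj, -, -, hDy⟩ := hD y ⟨hy.1, hyb⟩
      have := rightDeriv_sub_rightDeriv_le_coincidenceJumpMajorant_sub_of_frequently hψ hK hf
        hsel hx.1 hxy hyb hi hj
      linarith
  refine isLipschitzDCOn_Icc_of_hasDerivWithinAt_Ioi hf hM (hN.monotoneOn _) fun x hx => ?_
  obtain ⟨i, -, -, hderiv, -⟩ := hD x (Ioo_subset_Ico_self hx)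
  rwa [Pi.add_apply, add_sub_cancel_right]

theorem isLipschitzDC_on_Icc_of_continuous_of_mem_finite_family_general
    (α : ℝ) (p : ℕ) (φ : Fin p → ℝ → ℝ)
    (hφ : ∀ i, IsLipschitzDC (φ i))
    (g : ℝ → ℝ) (hg : ContinuousOn g (Icc 0 α))
    (hmem : ∀ x ∈ Ioo (0 : ℝ) α, ∃ i : Fin p, g x = φ i x) :
    ∃ y₁ y₂ : ℝ → ℝ,
      ConvexOn ℝ (Icc 0 α) y₁ ∧ ConvexOn ℝ (Icc 0 α) y₂ ∧
      (∃ K₁ : NNReal, LipschitzOnWith K₁ y₁ (Icc 0 α)) ∧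
      (∃ K₂ : NNReal, LipschitzOnWith K₂ y₂ (Icc 0 α)) ∧
      ∀ x ∈ Icc (0 : ℝ) α, g x = y₁ x - y₂ x := by
  choose c₁ c₂ hc₁ hc₂ hK₁ hK₂ hφc using hφ
  choose K₁ hK₁ using hK₁
  choose K₂ hK₂ using hK₂
  have hF := LipschitzWith.sum Finset.univ fun j _ => hK₂ j
  -- `φ i + ∑ j, c₂ j`, written as a visibly convex function
  set ψ : Fin p → ℝ → ℝ := fun i x => c₁ i x + ∑ j ∈ Finset.univ.erase i, c₂ j x
  have hsel : ∀ x ∈ Ioo 0 α, ∃ i, g x + ∑ j, c₂ j x = ψ i x := by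
    intro x hx
    obtain ⟨i, hi⟩ := hmem x hx
    refine ⟨i, ?_⟩
    rw [hi, hφc, ← Finset.add_sum_erase _ _ (Finset.mem_univ i)]
    ring
  have hgF := isLipschitzDCOn_Icc_of_forall_mem_Ioo_exists_eq
    (fun i => (hc₁ i).add (convexOn_sum convex_univ _ fun j _ => hc₂ j))
    (fun i => ⟨_, (hK₁ i).add (LipschitzWith.sum _ fun j _ => hK₂ j)⟩)
    (hg.add hF.continuous.continuousOn) hsel
  have hg' := hgF.sub ((convexOn_sum convex_univ _ fun j _ => hc₂ j).subset (subset_univ _)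
    (convex_Icc 0 α)) hF.lipschitzOnWith
  simp only [Pi.add_apply, add_sub_cancel_right] at hg'
  exact hg'

/-- If `g` is continuous on `[0, α]` and at each point of `(0, α)` coincides with one of
finitely many Lipschitz DC functions on `ℝ`, then `g` is a difference of two convex
Lipschitz functions on `[0, α]`. -/
theorem isLipschitzDC_on_Icc_of_continuous_of_mem_finite_family
    (α : ℝ) (hα : 0 < α) (p : ℕ) (φ : Fin p → ℝ → ℝ)
    (hφ : ∀ i, IsLipschitzDC (φ i))
    (g : ℝ → ℝ) (hg : ContinuousOn g (Icc 0 α))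
    (hmem : ∀ x ∈ Ioo (0 : ℝ) α, ∃ i : Fin p, g x = φ i x) :
    ∃ y₁ y₂ : ℝ → ℝ,
      ConvexOn ℝ (Icc 0 α) y₁ ∧ ConvexOn ℝ (Icc 0 α) y₂ ∧
      (∃ K₁ : NNReal, LipschitzOnWith K₁ y₁ (Icc 0 α)) ∧
      (∃ K₂ : NNReal, LipschitzOnWith K₂ y₂ (Icc 0 α)) ∧
      ∀ x ∈ Icc (0 : ℝ) α, g x = y₁ x - y₂ x :=
  isLipschitzDC_on_Icc_of_continuous_of_mem_finite_family_general α p φ hφ g hg hmem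
end
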